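/- arXiv:1004.3036 — 11 statements merged into one kernel-verified Lean document; each statement's English description precedes it below -/
import Mathlib

section
/- (Corollary to Theorem 2) Let T(n) be the sum of t(i) for 0 <= i <= n. Then T(0) = 0, and for every k >= 0: 3*T(2^k) = 2^(2k+1) + 1, and T(2^k + i) = T(2^k) + 2*T(i) + T(i+1) - 1 for all i with 1 <= i <= 2^k - 1. -/
/-!
Summing the recurrence `t (2^k + j) = 2 t j + t (j + 1)` over `1 ≤ j ≤ i` gives the
recurrence for the partial sums directly (the sum of `t (j + 1)` is `T (i + 1) - t 1`,
whence the `- 1`). Taking `i = 2^k - 1` and adding `t (2^(k+1)) = 2^(k+1)` yields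
`T (2^(k+1)) = 4 T (2^k) - 1`, and the closed form for `3 T (2^k)` follows by induction on `k`.
-/

open Finset

def partialSum (t : ℕ → ℕ) (n : ℕ) : ℕ := ∑ i ∈ range (n + 1), t i

namespace partialSum

variable {t : ℕ → ℕ}

theorem succ (n : ℕ) : partialSum t (n + 1) = partialSum t n + t (n + 1) :=
  sum_range_succ t (n + 1)

theorem zero (ht0 : t 0 = 0) : partialSum t 0 = 0 := by
  simp [partialSum, ht0]

theorem one (ht0 : t 0 = 0) (ht1 : t 1 = 1) : partialSum t 1 = 1 := by
  rw [succ, zero ht0, ht1]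

theorem two_pow_add_add_one {k : ℕ} (ht0 : t 0 = 0) (ht1 : t 1 = 1)
    (hrec : ∀ i, 1 ≤ i → i ≤ 2 ^ k - 1 → t (2 ^ k + i) = 2 * t i + t (i + 1))
    (i : ℕ) (hi : i ≤ 2 ^ k - 1) :
    partialSum t (2 ^ k + i) + 1 =
      partialSum t (2 ^ k) + 2 * partialSum t i + partialSum t (i + 1) := by
  induction i with
  | zero => simp [zero ht0, one ht0 ht1]
  | succ j ih =>
    have hnext : partialSum t (2 ^ k + (j + 1)) = partialSum t (2 ^ k + j) + t (2 ^ k + (j + 1)) :=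
      succ (2 ^ k + j)
    rw [hnext, hrec (j + 1) (by omega) hi, succ (j + 1)]
    linarith [ih (by omega), succ (t := t) j]

theorem two_pow_succ_add_one {k : ℕ} (ht0 : t 0 = 0) (ht1 : t 1 = 1)
    (hpow : t (2 ^ k) = 2 ^ k) (hpow_succ : t (2 ^ (k + 1)) = 2 ^ (k + 1))
    (hrec : ∀ i, 1 ≤ i → i ≤ 2 ^ k - 1 → t (2 ^ k + i) = 2 * t i + t (i + 1)) :
    partialSum t (2 ^ (k + 1)) + 1 = 4 * partialSum t (2 ^ k) := by
  have hk : 1 ≤ 2 ^ k := Nat.one_le_two_pow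
  have hlast := two_pow_add_add_one ht0 ht1 hrec (2 ^ k - 1) le_rfl
  have hbefore : partialSum t (2 ^ k) = partialSum t (2 ^ k - 1) + 2 ^ k := by
    have := succ (t := t) (2 ^ k - 1)
    rwa [Nat.sub_add_cancel hk, hpow] at this
  have htop : partialSum t (2 ^ (k + 1)) =
      partialSum t (2 ^ k + (2 ^ k - 1)) + 2 ^ (k + 1) := by
    have hidx : 2 ^ k + (2 ^ k - 1) + 1 = 2 ^ (k + 1) := by rw [pow_succ]; omega
    have := succ (t := t) (2 ^ k + (2 ^ k - 1))
    rwa [hidx, hpow_succ] at this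
  rw [Nat.sub_add_cancel hk] at hlast
  rw [htop, pow_succ]
  omega

theorem three_mul_two_pow (ht0 : t 0 = 0) (ht1 : t 1 = 1) (hpow : ∀ k, t (2 ^ k) = 2 ^ k)
    (hrec : ∀ k i, 1 ≤ i → i ≤ 2 ^ k - 1 → t (2 ^ k + i) = 2 * t i + t (i + 1)) (k : ℕ) :
    3 * partialSum t (2 ^ k) = 2 ^ (2 * k + 1) + 1 := by
  induction k with
  | zero => simp [one ht0 ht1]
  | succ k ih =>
    have := two_pow_succ_add_one ht0 ht1 (hpow k) (hpow (k + 1)) (hrec k)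
    have hexp : 2 ^ (2 * (k + 1) + 1) = 4 * 2 ^ (2 * k + 1) := by ring
    omega

end partialSum

/-- **Corollary to Theorem 2.** Let `t` be the toothpick increment sequence
(`t 0 = 0`, `t 1 = 1`, `t (2^k) = 2^k` and `t (2^k + i) = 2 t i + t (i+1)` for
`k ≥ 1`, `1 ≤ i ≤ 2^k - 1`) and let `T n = ∑_{i=0}^{n} t i`.  Then `T 0 = 0`
and for every `k ≥ 0`: `3 * T (2^k) = 2^(2k+1) + 1` and
`T (2^k + i) = T (2^k) + 2 * T i + T (i+1) - 1` for `1 ≤ i ≤ 2^k - 1`. -/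
theorem toothpick_partial_sum_recurrence
    (t : ℕ → ℕ)
    (ht0 : t 0 = 0) (ht1 : t 1 = 1)
    (htpow : ∀ k, 1 ≤ k → t (2 ^ k) = 2 ^ k)
    (htrec : ∀ k, 1 ≤ k → ∀ i, 1 ≤ i → i ≤ 2 ^ k - 1 →
      t (2 ^ k + i) = 2 * t i + t (i + 1))
    (T : ℕ → ℕ)
    (hT : ∀ n, T n = ∑ i ∈ Finset.range (n + 1), t i) :
    T 0 = 0 ∧
      ∀ k, 3 * T (2 ^ k) = 2 ^ (2 * k + 1) + 1 ∧
        ∀ i, 1 ≤ i → i ≤ 2 ^ k - 1 →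
          T (2 ^ k + i) + 1 = T (2 ^ k) + 2 * T i + T (i + 1) := by
  obtain rfl : T = partialSum t := funext hT
  -- at `k = 0` the range `1 ≤ i ≤ 2^k - 1` is empty and `t (2^0) = t 1`
  have hpow : ∀ k, t (2 ^ k) = 2 ^ k := fun k => by
    rcases Nat.eq_zero_or_pos k with rfl | hk
    · exact ht1
    · exact htpow k hk
  have hrec : ∀ k i, 1 ≤ i → i ≤ 2 ^ k - 1 → t (2 ^ k + i) = 2 * t i + t (i + 1) :=
    fun k i hi hik => htrec k (Nat.pos_of_ne_zero (by rintro rfl; omega)) i hi hik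
  refine ⟨partialSum.zero ht0, fun k => ⟨partialSum.three_mul_two_pow ht0 ht1 hpow hrec k, ?_⟩⟩
  exact fun i _ hik => partialSum.two_pow_add_add_one ht0 ht1 (hrec k) i hik
end

section
/- For every k >= 0, the sum of t(i) over 2^k <= i <= 2^(k+1) - 1 equals 2^k * (2^(k+1) - 1). -/
/-!
Let `S n = ∑_{i<n} t i`. Unfolding the recursion over the block `[2^k, 2^(k+1))` gives
`B_k + 1 = 3 S(2^k) + 2^(k+1)` for the block sum `B_k`, and `S(2^(k+1)) = S(2^k) + B_k`.
Together these yield `3 S(2^k) + 3·2^k = 2·4^k + 1` by induction, hence `B_k = 2·4^k - 2^k`.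
-/

open Finset

lemma sum_range_two_mul_add_succ (f : ℕ → ℕ) (h0 : f 0 = 0) (n : ℕ) :
    ∑ i ∈ range n, (2 * f i + f (i + 1)) = 3 * ∑ i ∈ range n, f i + f n := by
  induction n with
  | zero => simp [h0]
  | succ n ih => rw [sum_range_succ, ih, sum_range_succ]; ring

section Toothpick

variable {t : ℕ → ℕ} (ht0 : t 0 = 0) (ht1 : t 1 = 1)
  (htpow : ∀ k, 1 ≤ k → t (2 ^ k) = 2 ^ k)
  (htrec : ∀ k, 1 ≤ k → ∀ i, 1 ≤ i → i ≤ 2 ^ k - 1 →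
    t (2 ^ k + i) = 2 * t i + t (i + 1))
include ht0 ht1 htpow htrec

lemma sum_range_two_pow_add_add_one {k : ℕ} (hk : 1 ≤ k) :
    ∑ i ∈ range (2 ^ k), t (2 ^ k + i) + 1 =
      ∑ i ∈ range (2 ^ k), (2 * t i + t (i + 1)) + 2 ^ k := by
  -- the recursion covers every term but `i = 0`,
  -- where `t (2 ^ k) = 2 ^ k` stands in for `2 t 0 + t 1 = 1`
  obtain ⟨m, hm⟩ : ∃ m, 2 ^ k = m + 1 := ⟨2 ^ k - 1, by have := k.one_le_two_pow; omega⟩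
  have hterms : ∀ i ∈ range m, t (2 ^ k + (i + 1)) = 2 * t (i + 1) + t (i + 1 + 1) :=
    fun i hi => htrec k hk (i + 1) (by omega) (by rw [mem_range] at hi; omega)
  rw [show range (2 ^ k) = range (m + 1) by rw [hm], sum_range_succ', sum_range_succ',
    sum_congr rfl hterms, add_zero, htpow k hk, ht0, ht1]
  ring

lemma sum_Ico_two_pow_add_one (k : ℕ) :
    ∑ i ∈ Ico (2 ^ k) (2 ^ (k + 1)), t i + 1 =
      3 * ∑ i ∈ range (2 ^ k), t i + 2 ^ (k + 1) := by
  rcases Nat.eq_zero_or_pos k with rfl | hk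
  · simp [ht0, ht1]
  have hlen : 2 ^ (k + 1) - 2 ^ k = 2 ^ k := by rw [pow_succ]; omega
  rw [sum_Ico_eq_sum_range, hlen, sum_range_two_pow_add_add_one ht0 ht1 htpow htrec hk,
    sum_range_two_mul_add_succ t ht0, htpow k hk, pow_succ]
  ring

lemma three_mul_sum_range_two_pow (k : ℕ) :
    3 * ∑ i ∈ range (2 ^ k), t i + 3 * 2 ^ k = 2 * 4 ^ k + 1 := by
  induction k with
  | zero => simp [ht0]
  | succ k ih =>
    have hsplit := sum_range_add_sum_Ico t (Nat.pow_le_pow_right two_pos k.le_succ)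
    have hblock := sum_Ico_two_pow_add_one ht0 ht1 htpow htrec k
    rw [pow_succ, pow_succ] at *
    omega

end Toothpick

/-- Let `t` be the toothpick increment sequence (`t 0 = 0`, `t 1 = 1`,
`t (2^k) = 2^k` and `t (2^k + i) = 2 t i + t (i+1)` for `k ≥ 1`,
`1 ≤ i ≤ 2^k - 1`).  For every `k ≥ 0`, the sum of `t i` over
`2^k ≤ i ≤ 2^(k+1) - 1` equals `2^k * (2^(k+1) - 1)`. -/
theorem toothpick_block_sum
    (t : ℕ → ℕ)
    (ht0 : t 0 = 0) (ht1 : t 1 = 1)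
    (htpow : ∀ k, 1 ≤ k → t (2 ^ k) = 2 ^ k)
    (htrec : ∀ k, 1 ≤ k → ∀ i, 1 ≤ i → i ≤ 2 ^ k - 1 →
      t (2 ^ k + i) = 2 * t i + t (i + 1)) :
    ∀ k, ∑ i ∈ Finset.Ico (2 ^ k) (2 ^ (k + 1)), t i = 2 ^ k * (2 ^ (k + 1) - 1) := by
  intro k
  have hblock := sum_Ico_two_pow_add_one ht0 ht1 htpow htrec k
  have hcum := three_mul_sum_range_two_pow ht0 ht1 htpow htrec k
  rw [show (4 : ℕ) ^ k = 2 ^ k * 2 ^ k by rw [← mul_pow]; rfl] at hcum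
  rw [pow_succ] at *
  generalize 2 ^ k = n at *
  rw [Nat.mul_sub_one, ← mul_assoc]
  omega
end

section
/- (Jubin bound, Theorem in Sec. 5) Let T(n) be the sum of t(i) for 0 <= i <= n. For every n >= 1, 3*T(n) <= 2*n^2 + n (equivalently, T(n)/n^2 <= 2/3 + 1/(3n)), and equality holds if and only if n = 2^k - 1 for some integer k >= 1. -/
/-!
Write `D n = 2n² + n - 3T(n)`. For `p = 2^k` and `1 ≤ m < p` the recursion for `t` sums to
`T(p + m) = T(p) + 2T(m) + T(m + 1) - 1`, which in terms of `D` reads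
`D(p + m) = D(p) + 2D(m) + D(m + 1) + 2m(2p - 2m - 3)`, while `D(p) = D(p - 1) + (p - 1)`.
The correction term is positive for `m ≤ p - 2`, and for `m = p - 1` the two identities give
`D(2p - 1) = 4D(p - 1)`. Hence, by strong induction on `n = p + m`, `D` vanishes at the numbers
`2^k - 1` and is positive everywhere else.
-/

open Finset

def jubinDefect (t : ℕ → ℕ) (n : ℕ) : ℤ :=
  2 * n ^ 2 + n - 3 * ∑ i ∈ range (n + 1), (t i : ℤ)

section

variable {t : ℕ → ℕ}

theorem jubinDefect_zero (ht0 : t 0 = 0) : jubinDefect t 0 = 0 := by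
  simp [jubinDefect, ht0]

theorem sum_range_two_pow_add
    (ht0 : t 0 = 0) (ht1 : t 1 = 1)
    (htrec : ∀ k, 1 ≤ k → ∀ i, 1 ≤ i → i ≤ 2 ^ k - 1 →
      t (2 ^ k + i) = 2 * t i + t (i + 1))
    {k m : ℕ} (hm : m < 2 ^ k) :
    ∑ i ∈ range (2 ^ k + m + 1), t i + 1 =
      ∑ i ∈ range (2 ^ k + 1), t i + 2 * ∑ i ∈ range (m + 1), t i +
        ∑ i ∈ range (m + 2), t i := by
  induction m with
  | zero => simp [sum_range_succ, ht0, ht1]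
  | succ m ih =>
    have hk : 1 ≤ k := Nat.one_le_iff_ne_zero.mpr fun hk => by simp [hk] at hm
    have hstep := htrec k hk (m + 1) (by omega) (by omega)
    have ih' := ih (by omega)
    rw [← add_assoc] at hstep
    rw [← add_assoc, sum_range_succ, hstep,
      sum_range_succ _ (m + 1), sum_range_succ _ (m + 2)]
    linarith

theorem jubinDefect_two_pow_add
    (ht0 : t 0 = 0) (ht1 : t 1 = 1)
    (htrec : ∀ k, 1 ≤ k → ∀ i, 1 ≤ i → i ≤ 2 ^ k - 1 →
      t (2 ^ k + i) = 2 * t i + t (i + 1))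
    {k m : ℕ} (hm : m < 2 ^ k) :
    jubinDefect t (2 ^ k + m) =
      jubinDefect t (2 ^ k) + 2 * jubinDefect t m + jubinDefect t (m + 1) +
        2 * m * (2 * 2 ^ k - 2 * m - 3) := by
  have hsum := sum_range_two_pow_add ht0 ht1 htrec hm
  zify at hsum
  simp only [jubinDefect]
  push_cast
  linarith

theorem jubinDefect_succ_of_succ_eq_two_pow
    (ht1 : t 1 = 1) (htpow : ∀ k, 1 ≤ k → t (2 ^ k) = 2 ^ k)
    {n k : ℕ} (hn : n + 1 = 2 ^ k) :
    jubinDefect t (n + 1) = jubinDefect t n + n := by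
  have htn : t (n + 1) = n + 1 := by
    rcases Nat.eq_zero_or_pos k with rfl | hk
    · simp_all
    · rw [hn, htpow k hk]
  simp only [jubinDefect, sum_range_succ _ (n + 1), htn]
  push_cast
  ring

theorem jubinDefect_two_pow_sub_one
    (ht0 : t 0 = 0) (ht1 : t 1 = 1) (htpow : ∀ k, 1 ≤ k → t (2 ^ k) = 2 ^ k)
    (htrec : ∀ k, 1 ≤ k → ∀ i, 1 ≤ i → i ≤ 2 ^ k - 1 →
      t (2 ^ k + i) = 2 * t i + t (i + 1))
    (k : ℕ) : jubinDefect t (2 ^ k - 1) = 0 := by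
  induction k with
  | zero => exact jubinDefect_zero ht0
  | succ k ih =>
    set n := 2 ^ k - 1
    have hn : n + 1 = 2 ^ k := Nat.sub_add_cancel Nat.one_le_two_pow
    have hnext : 2 ^ (k + 1) - 1 = 2 ^ k + n := by omega
    have hpow := jubinDefect_succ_of_succ_eq_two_pow ht1 htpow hn
    rw [hnext, jubinDefect_two_pow_add ht0 ht1 htrec (by omega), ← hn, hpow, ih]
    have hnZ : (2 : ℤ) ^ k = n + 1 := by exact_mod_cast hn.symm
    rw [hnZ]
    ring

theorem jubinDefect_pos_of_forall_lt
    (ht0 : t 0 = 0) (ht1 : t 1 = 1) (htpow : ∀ k, 1 ≤ k → t (2 ^ k) = 2 ^ k)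
    (htrec : ∀ k, 1 ≤ k → ∀ i, 1 ≤ i → i ≤ 2 ^ k - 1 →
      t (2 ^ k + i) = 2 * t i + t (i + 1))
    {n : ℕ} (hlt : ∀ j < n, 0 ≤ jubinDefect t j) (hn : ∀ k, n + 1 ≠ 2 ^ k) :
    0 < jubinDefect t n := by
  have hn0 : n ≠ 0 := fun h => hn 0 (by simp [h])
  obtain ⟨k, m, hmk, rfl⟩ : ∃ k m, m < 2 ^ k ∧ n = 2 ^ k + m := by
    have hlow := Nat.pow_log_le_self 2 hn0
    have hhigh : n < 2 * 2 ^ Nat.log 2 n := by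
      rw [← pow_succ']; exact Nat.lt_pow_succ_log_self (by norm_num) n
    exact ⟨Nat.log 2 n, n - 2 ^ Nat.log 2 n, by omega, by omega⟩
  rcases Nat.eq_zero_or_pos m with rfl | hm
  · obtain ⟨q, hq⟩ : ∃ q, q + 1 = 2 ^ k := ⟨2 ^ k - 1, Nat.sub_add_cancel Nat.one_le_two_pow⟩
    have hq0 : q ≠ 0 := fun h => hn 1 (by omega)
    rw [add_zero, ← hq, jubinDefect_succ_of_succ_eq_two_pow ht1 htpow hq]
    have := hlt q (by omega)
    have : (0 : ℤ) < q := by exact_mod_cast Nat.pos_of_ne_zero hq0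
    linarith
  · have hm2 : m + 2 ≤ 2 ^ k := by
      by_contra h
      exact hn (k + 1) (by rw [pow_succ]; omega)
    rw [jubinDefect_two_pow_add ht0 ht1 htrec (by omega)]
    have h1 := hlt (2 ^ k) (by omega)
    have h2 := hlt m (by omega)
    have h3 := hlt (m + 1) (by omega)
    have hcorr : (0 : ℤ) < 2 * m * (2 * 2 ^ k - 2 * m - 3) := by
      have : (m : ℤ) + 2 ≤ 2 ^ k := by exact_mod_cast hm2
      have : (0 : ℤ) < m := by exact_mod_cast hm
      exact mul_pos (by positivity) (by linarith)
    linarith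

theorem jubinDefect_nonneg
    (ht0 : t 0 = 0) (ht1 : t 1 = 1) (htpow : ∀ k, 1 ≤ k → t (2 ^ k) = 2 ^ k)
    (htrec : ∀ k, 1 ≤ k → ∀ i, 1 ≤ i → i ≤ 2 ^ k - 1 →
      t (2 ^ k + i) = 2 * t i + t (i + 1))
    (n : ℕ) : 0 ≤ jubinDefect t n := by
  induction n using Nat.strong_induction_on with
  | _ n ih =>
    by_cases hn : ∃ k, n + 1 = 2 ^ k
    · obtain ⟨k, hk⟩ := hn
      rw [show n = 2 ^ k - 1 by omega, jubinDefect_two_pow_sub_one ht0 ht1 htpow htrec]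
    · push Not at hn
      exact (jubinDefect_pos_of_forall_lt ht0 ht1 htpow htrec ih hn).le

theorem jubinDefect_eq_zero_iff
    (ht0 : t 0 = 0) (ht1 : t 1 = 1) (htpow : ∀ k, 1 ≤ k → t (2 ^ k) = 2 ^ k)
    (htrec : ∀ k, 1 ≤ k → ∀ i, 1 ≤ i → i ≤ 2 ^ k - 1 →
      t (2 ^ k + i) = 2 * t i + t (i + 1))
    (n : ℕ) : jubinDefect t n = 0 ↔ ∃ k, n + 1 = 2 ^ k := by
  constructor
  · intro h
    by_contra! hn
    exact (jubinDefect_pos_of_forall_lt ht0 ht1 htpow htrec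
      (fun j _ => jubinDefect_nonneg ht0 ht1 htpow htrec j) hn).ne' h
  · rintro ⟨k, hk⟩
    rw [show n = 2 ^ k - 1 by omega, jubinDefect_two_pow_sub_one ht0 ht1 htpow htrec]

end

/-- **Jubin bound.** Let `t` be the toothpick increment sequence and
`T n = ∑_{i=0}^{n} t i`.  For every `n ≥ 1`, `3 * T n ≤ 2 * n^2 + n`
(equivalently `T n / n^2 ≤ 2/3 + 1/(3n)`), with equality if and only if
`n = 2^k - 1` for some integer `k ≥ 1`. -/
theorem toothpick_jubin_bound
    (t : ℕ → ℕ)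
    (ht0 : t 0 = 0) (ht1 : t 1 = 1)
    (htpow : ∀ k, 1 ≤ k → t (2 ^ k) = 2 ^ k)
    (htrec : ∀ k, 1 ≤ k → ∀ i, 1 ≤ i → i ≤ 2 ^ k - 1 →
      t (2 ^ k + i) = 2 * t i + t (i + 1))
    (T : ℕ → ℕ)
    (hT : ∀ n, T n = ∑ i ∈ Finset.range (n + 1), t i) :
    ∀ n, 1 ≤ n →
      3 * T n ≤ 2 * n ^ 2 + n ∧
        (3 * T n = 2 * n ^ 2 + n ↔ ∃ k, 1 ≤ k ∧ n = 2 ^ k - 1) := by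
  intro n hn
  have hD : ((3 * T n : ℕ) : ℤ) = ((2 * n ^ 2 + n : ℕ) : ℤ) - jubinDefect t n := by
    simp [jubinDefect, hT]
  have hzero := jubinDefect_eq_zero_iff ht0 ht1 htpow htrec n
  refine ⟨?_, ?_⟩
  · have := jubinDefect_nonneg ht0 ht1 htpow htrec n
    omega
  · rw [← Nat.cast_inj (R := ℤ), hD, sub_eq_self, hzero]
    refine exists_congr fun k => ⟨fun hk => ⟨?_, by omega⟩, fun ⟨_, hk⟩ => by omega⟩
    refine Nat.one_le_iff_ne_zero.mpr fun h => ?_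
    simp [h] at hk
    omega
end

section
/- Let T(n) be the sum of t(i) for 0 <= i <= n. Then the limit superior, as n tends to infinity, of the real sequence T(n)/n^2 equals 2/3. -/
/-!
Summing the defining recurrence gives `T (2^k + j) + 1 = T (2^k) + 2 T j + T (j + 1)` for
`j < 2^k`. At `j = 2^k - 1` this yields the exact values `3 T (2^k) = 2 (2^k)^2 + 1`, and by
strong induction `3 T n ≤ 2 (n + 1)^2` for all `n`. Hence `T n / n^2 ≤ 2/3 (1 + 1/n)^2`, while
the ratio is at least `2/3` along `n = 2^k`.
-/

open Filter Topology

theorem limsup_eq_of_eventually_le_of_frequently_ge {ι : Type*} {f : Filter ι} [f.NeBot]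
    {u v : ι → ℝ} {L : ℝ} (hle : ∀ᶠ i in f, u i ≤ v i) (hv : Tendsto v f (𝓝 L))
    (hfreq : ∃ᶠ i in f, L ≤ u i) :
    limsup u f = L := by
  have hbdd : IsBoundedUnder (· ≤ ·) f u := hv.isBoundedUnder_le.mono_le hle
  have hcobdd : IsCoboundedUnder (· ≤ ·) f u := IsCoboundedUnder.of_frequently_ge hfreq
  exact le_antisymm ((limsup_le_limsup hle hcobdd hv.isBoundedUnder_le).trans_eq hv.limsup_eq)
    (le_limsup_of_frequently_le hfreq hbdd)

theorem exists_eq_two_pow_add {n : ℕ} (hn : n ≠ 0) : ∃ k j, j < 2 ^ k ∧ n = 2 ^ k + j := by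
  refine ⟨Nat.log 2 n, n - 2 ^ Nat.log 2 n, ?_, ?_⟩
  · have := Nat.lt_pow_succ_log_self one_lt_two n
    rw [pow_succ] at this
    omega
  · have := Nat.pow_log_le_self 2 hn
    omega

namespace Toothpick

def partialSum (t : ℕ → ℕ) (n : ℕ) : ℕ := ∑ i ∈ Finset.range (n + 1), t i

theorem partialSum_zero (t : ℕ → ℕ) : partialSum t 0 = t 0 := by
  simp [partialSum]

theorem partialSum_succ (t : ℕ → ℕ) (n : ℕ) :
    partialSum t (n + 1) = partialSum t n + t (n + 1) :=
  Finset.sum_range_succ _ _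

structure IsIncrementSeq (t : ℕ → ℕ) : Prop where
  zero : t 0 = 0
  one : t 1 = 1
  two_pow : ∀ k, 1 ≤ k → t (2 ^ k) = 2 ^ k
  two_pow_add : ∀ k, 1 ≤ k → ∀ i, 1 ≤ i → i ≤ 2 ^ k - 1 →
    t (2 ^ k + i) = 2 * t i + t (i + 1)

namespace IsIncrementSeq

variable {t : ℕ → ℕ}

theorem apply_two_pow (h : IsIncrementSeq t) (k : ℕ) : t (2 ^ k) = 2 ^ k := by
  rcases k.eq_zero_or_pos with rfl | hk
  · exact h.one
  · exact h.two_pow k hk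

theorem partialSum_one (h : IsIncrementSeq t) : partialSum t 1 = 1 := by
  rw [partialSum_succ, partialSum_zero, h.zero, h.one]

theorem partialSum_two_pow_sub_one_add (h : IsIncrementSeq t) (k : ℕ) :
    partialSum t (2 ^ k - 1) + 2 ^ k = partialSum t (2 ^ k) := by
  have hsucc := partialSum_succ t (2 ^ k - 1)
  rw [Nat.sub_add_cancel Nat.one_le_two_pow] at hsucc
  rw [hsucc, h.apply_two_pow]

theorem partialSum_two_pow_add (h : IsIncrementSeq t) {k j : ℕ} (hj : j < 2 ^ k) :
    partialSum t (2 ^ k + j) + 1 =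
      partialSum t (2 ^ k) + 2 * partialSum t j + partialSum t (j + 1) := by
  induction j with
  | zero => simp [h.partialSum_one, partialSum_zero, h.zero]
  | succ j ih =>
    have hk : 1 ≤ k := Nat.pos_of_ne_zero <| by rintro rfl; omega
    have ht := h.two_pow_add k hk (j + 1) (by omega) (by omega)
    have hrec := ih (by omega)
    rw [← add_assoc] at ht ⊢
    rw [partialSum_succ, partialSum_succ t j, partialSum_succ t (j + 1), ht]
    omega

theorem three_mul_partialSum_two_pow (h : IsIncrementSeq t) (k : ℕ) :
    3 * partialSum t (2 ^ k) = 2 * (2 ^ k) ^ 2 + 1 := by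
  induction k with
  | zero => simp [h.partialSum_one]
  | succ k ih =>
    have hhalf := h.partialSum_two_pow_add (k := k) (j := 2 ^ k - 1) (by simp)
    have hprev := h.partialSum_two_pow_sub_one_add k
    have hlast := h.partialSum_two_pow_sub_one_add (k + 1)
    rw [Nat.sub_add_cancel Nat.one_le_two_pow,
      show 2 ^ k + (2 ^ k - 1) = 2 ^ (k + 1) - 1 by rw [pow_succ]; omega] at hhalf
    rw [pow_succ] at hhalf hlast ⊢
    nlinarith

theorem three_mul_partialSum_le (h : IsIncrementSeq t) (n : ℕ) :
    3 * partialSum t n ≤ 2 * (n + 1) ^ 2 := by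
  induction n using Nat.strong_induction_on with
  | _ n ih =>
  -- If `n + 1 = 2^k`, the recurrence would need `T (2^(k-1))`, where the induction hypothesis
  -- is too weak; the exact value is used instead.
  by_cases hpow : ∃ k, n + 1 = 2 ^ k
  · obtain ⟨k, hk⟩ := hpow
    have hprev := h.partialSum_two_pow_sub_one_add k
    have hval := h.three_mul_partialSum_two_pow k
    rw [show 2 ^ k - 1 = n by omega, ← hk] at hprev
    rw [← hk] at hval
    nlinarith
  · push Not at hpow
    obtain ⟨k, j, hj, rfl⟩ := exists_eq_two_pow_add (n := n) (by specialize hpow 0; omega)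
    have hj1 : j + 1 < 2 ^ k := by
      specialize hpow (k + 1)
      rw [pow_succ] at hpow
      omega
    have hrec := h.partialSum_two_pow_add hj
    have hvalj := ih j (by omega)
    have hvalj1 := ih (j + 1) (by omega)
    have hval := h.three_mul_partialSum_two_pow k
    nlinarith

theorem partialSum_div_sq_le (h : IsIncrementSeq t) {n : ℕ} (hn : n ≠ 0) :
    (partialSum t n : ℝ) / (n : ℝ) ^ 2 ≤ 2 / 3 * (1 + 1 / (n : ℝ)) ^ 2 := by
  have hbound : (3 * partialSum t n : ℝ) ≤ 2 * (n + 1) ^ 2 := by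
    exact_mod_cast h.three_mul_partialSum_le n
  have hrhs : 2 / 3 * (1 + 1 / (n : ℝ)) ^ 2 * (n : ℝ) ^ 2 = 2 / 3 * (n + 1) ^ 2 := by
    field_simp
  rw [div_le_iff₀ (by positivity), hrhs]
  linarith

theorem two_thirds_le_partialSum_two_pow_div_sq (h : IsIncrementSeq t) (k : ℕ) :
    2 / 3 ≤ (partialSum t (2 ^ k) : ℝ) / ((2 ^ k : ℕ) : ℝ) ^ 2 := by
  have hval : (3 * partialSum t (2 ^ k) : ℝ) = 2 * ((2 ^ k : ℕ) : ℝ) ^ 2 + 1 := by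
    exact_mod_cast h.three_mul_partialSum_two_pow k
  rw [le_div_iff₀ (by positivity)]
  linarith

end IsIncrementSeq

end Toothpick

/-- Let `t` be the toothpick increment sequence and `T n = ∑_{i=0}^{n} t i`.
Then the limit superior of the real sequence `T n / n^2` equals `2/3`. -/
theorem toothpick_limsup
    (t : ℕ → ℕ)
    (ht0 : t 0 = 0) (ht1 : t 1 = 1)
    (htpow : ∀ k, 1 ≤ k → t (2 ^ k) = 2 ^ k)
    (htrec : ∀ k, 1 ≤ k → ∀ i, 1 ≤ i → i ≤ 2 ^ k - 1 →
      t (2 ^ k + i) = 2 * t i + t (i + 1))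
    (T : ℕ → ℕ)
    (hT : ∀ n, T n = ∑ i ∈ Finset.range (n + 1), t i) :
    Filter.limsup (fun n : ℕ => (T n : ℝ) / (n : ℝ) ^ 2) Filter.atTop = 2 / 3 := by
  obtain rfl : T = Toothpick.partialSum t := funext hT
  have h : Toothpick.IsIncrementSeq t := ⟨ht0, ht1, htpow, htrec⟩
  refine limsup_eq_of_eventually_le_of_frequently_ge
    (v := fun n : ℕ => 2 / 3 * (1 + 1 / (n : ℝ)) ^ 2) ?_ ?_ ?_
  · filter_upwards [eventually_ne_atTop 0] with n hn using h.partialSum_div_sq_le hn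
  · have hlim := (tendsto_const_nhds (x := (1 : ℝ))).add tendsto_one_div_atTop_nhds_zero_nat
    simpa using (hlim.pow 2).const_mul (2 / 3 : ℝ)
  · exact (tendsto_pow_atTop_atTop_of_one_lt one_lt_two).frequently
      (.of_forall h.two_thirds_le_partialSum_two_pow_div_sq)
end

section
/- (Theorem 3(i)) For the Ulam-Warburton cellular automaton, the number u(n) of cells turned ON at stage n satisfies: u(0) = 0, u(1) = 1, and for every k >= 0, u(2^k + 1) = 4 and u(2^k + j) = 3*u(j) for all j with 2 <= j <= 2^k. -/
/-!
Let `M = 2 ^ k`. Then `S M` contains the whole sphere `|x| + |y| = M - 1`, and for `j ≤ M` the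
stage `S (M + j)` is `S M` together with four rotated copies of `S j` grown from the tips
`(±M, 0)`, `(0, ±M)`; the copy at `(M, 0)` keeps only the cells `q` of `S j` with
`-|q.2| ≤ q.1`, the others being blocked by `S M`. This is proved by induction on `k` and, for
fixed `k`, on `j`. No cell with `|x| = |y|` switches on after stage `1`, since the reflection in
its diagonal pairs up its ON neighbours; so the copies stay apart, and a cell of a copy has
exactly as many ON neighbours as the corresponding cell of `S j`.

Counting, `u (M + j)` is four times the number of cells `q` switched on at stage `j` with
`-|q.2| ≤ q.1`. For `j = 1` that cell is the origin; for `j ≥ 2` these cells are off-diagonal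
and invariant under the quarter turn, and exactly three of the four rotations of an
off-diagonal cell satisfy `-|q.2| ≤ q.1`, whence `u (M + j) = 3 u j`.
-/

def vnNbrs (p : ℤ × ℤ) : Finset (ℤ × ℤ) :=
  {(p.1 - 1, p.2), (p.1 + 1, p.2), (p.1, p.2 - 1), (p.1, p.2 + 1)}

open Finset

namespace UlamWarburton

theorem mem_vnNbrs {p r : ℤ × ℤ} : r ∈ vnNbrs p ↔
    r = (p.1 - 1, p.2) ∨ r = (p.1 + 1, p.2) ∨ r = (p.1, p.2 - 1) ∨ r = (p.1, p.2 + 1) := by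
  simp [vnNbrs]

theorem card_filter_vnNbrs (P : ℤ × ℤ → Prop) [DecidablePred P] (p : ℤ × ℤ) :
    #((vnNbrs p).filter P) =
      (if P (p.1 - 1, p.2) then 1 else 0) + (if P (p.1 + 1, p.2) then 1 else 0) +
        (if P (p.1, p.2 - 1) then 1 else 0) + (if P (p.1, p.2 + 1) then 1 else 0) := by
  rw [card_filter, vnNbrs, sum_insert, sum_insert, sum_insert, sum_singleton, ← add_assoc,
    ← add_assoc] <;> simp [Prod.ext_iff] <;> omega

theorem card_vnNbrs_map_inter {f : ℤ × ℤ → ℤ × ℤ} (hf : Function.Injective f) {p : ℤ × ℤ}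
    (hp : vnNbrs (f p) = (vnNbrs p).image f) {A : Finset (ℤ × ℤ)} (hA : ∀ r, f r ∈ A ↔ r ∈ A) :
    #(vnNbrs (f p) ∩ A) = #(vnNbrs p ∩ A) := by
  simp only [hp, ← filter_mem_eq_inter, filter_image, hA, card_image_of_injective _ hf]

theorem mem_vnNbrs_comm {p r : ℤ × ℤ} : r ∈ vnNbrs p ↔ p ∈ vnNbrs r := by
  simp only [mem_vnNbrs, Prod.ext_iff]; omega

theorem vnNbrs_add (a p : ℤ × ℤ) : vnNbrs (a + p) = (vnNbrs p).image (a + ·) := by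
  ext r
  simp only [vnNbrs, image_insert, image_singleton, mem_insert, mem_singleton, Prod.ext_iff,
    Prod.fst_add, Prod.snd_add]
  omega

theorem vnNbrs_swap (p : ℤ × ℤ) : vnNbrs p.swap = (vnNbrs p).image Prod.swap := by
  ext r
  simp only [vnNbrs, image_insert, image_singleton, mem_insert, mem_singleton, Prod.ext_iff,
    Prod.fst_swap, Prod.snd_swap]
  omega

def norm1 (p : ℤ × ℤ) : ℤ := |p.1| + |p.2|

theorem norm1_le_of_mem_vnNbrs {p r : ℤ × ℤ} (hr : r ∈ vnNbrs p) : norm1 p ≤ norm1 r + 1 := by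
  rcases mem_vnNbrs.1 hr with rfl | rfl | rfl | rfl <;>
    · simp only [norm1, abs_eq_max_neg]; omega

def rot (p : ℤ × ℤ) : ℤ × ℤ := (-p.2, p.1)

theorem rot_injective : Function.Injective rot := fun a b h => by
  simp only [rot, Prod.ext_iff, neg_inj] at h ⊢; exact ⟨h.2, h.1⟩

theorem vnNbrs_rot (p : ℤ × ℤ) : vnNbrs (rot p) = (vnNbrs p).image rot := by
  ext r
  simp only [vnNbrs, rot, image_insert, image_singleton, mem_insert, mem_singleton, Prod.ext_iff]
  omega

theorem vnNbrs_rot_iterate (i : ℕ) (p : ℤ × ℤ) :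
    vnNbrs (rot^[i] p) = (vnNbrs p).image rot^[i] := by
  induction i with
  | zero => simp
  | succ i ih =>
    rw [Function.iterate_succ_apply', vnNbrs_rot, ih, image_image, Function.iterate_succ']

theorem rot_iterate_four : rot^[4] = id := by
  funext p; simp [rot]

theorem rot_iterate_mod_four (n : ℕ) : rot^[n % 4] = rot^[n] := by
  conv_rhs => rw [← Nat.mod_add_div n 4, Function.iterate_add, Function.iterate_mul,
    rot_iterate_four, Function.iterate_id, Function.comp_id]

theorem rot_iterate_three_mul_apply (i : ℕ) (p : ℤ × ℤ) : rot^[3 * i] (rot^[i] p) = p := by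
  rw [← Function.iterate_add_apply, ← add_one_mul, Function.iterate_mul, show 3 + 1 = 4 from rfl,
    rot_iterate_four, Function.iterate_id, id]

theorem rot_iterate_apply_three_mul (i : ℕ) (p : ℤ × ℤ) : rot^[i] (rot^[3 * i] p) = p := by
  rw [← Function.iterate_add_apply, add_comm, Function.iterate_add_apply,
    rot_iterate_three_mul_apply]

theorem norm1_rot_iterate (i : ℕ) (p : ℤ × ℤ) : norm1 (rot^[i] p) = norm1 p := by
  induction i with
  | zero => rfl
  | succ i ih => rw [Function.iterate_succ_apply', ← ih, norm1, norm1, rot, abs_neg, add_comm]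

theorem abs_eq_abs_rot_iterate_iff (i : ℕ) (p : ℤ × ℤ) :
    |(rot^[i] p).1| = |(rot^[i] p).2| ↔ |p.1| = |p.2| := by
  induction i with
  | zero => rfl
  | succ i ih => rw [Function.iterate_succ_apply', ← ih, rot, abs_neg, eq_comm]

theorem exists_rot_iterate_abs_le (p : ℤ × ℤ) : ∃ i, |(rot^[i] p).2| ≤ (rot^[i] p).1 := by
  have : |p.2| ≤ p.1 ∨ |p.1| ≤ -p.2 ∨ |p.2| ≤ -p.1 ∨ |p.1| ≤ p.2 := by
    simp only [abs_eq_max_neg]; omega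
  rcases this with h | h | h | h
  exacts [⟨0, h⟩, ⟨1, by simpa [rot] using h⟩, ⟨2, by simpa [rot] using h⟩,
    ⟨3, by simpa [rot] using h⟩]

theorem eq_of_rot_iterate_eq {i i' : ℕ} (hi : i < 4) (hi' : i' < 4) {e e' : ℤ × ℤ}
    (he : |e.2| < e.1) (he' : |e'.2| ≤ e'.1) (h : rot^[i] e = rot^[i'] e') : i = i' := by
  interval_cases i <;> interval_cases i' <;>
    simp only [rot, Function.iterate_succ, Function.iterate_zero, Function.comp_apply, id,
      Prod.ext_iff, neg_inj] at h <;>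
    first | rfl | (simp only [abs_eq_max_neg] at he he'; omega)

def Outward (q : ℤ × ℤ) : Prop := -|q.2| ≤ q.1

instance : DecidablePred Outward := fun q => inferInstanceAs (Decidable (-|q.2| ≤ q.1))

theorem outward_or_of_mem_vnNbrs {q r : ℤ × ℤ} (hq : Outward q) (hr : r ∈ vnNbrs q) :
    Outward r ∨ r.1 = -1 - |r.2| := by
  unfold Outward at *
  rcases mem_vnNbrs.1 hr with rfl | rfl | rfl | rfl <;>
    · simp only [abs_eq_max_neg] at *; omega

theorem outward_of_mem_vnNbrs {q r : ℤ × ℤ} (hq : -|q.2| < q.1) (hr : r ∈ vnNbrs q) :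
    Outward r := by
  unfold Outward
  rcases mem_vnNbrs.1 hr with rfl | rfl | rfl | rfl <;>
    · simp only [abs_eq_max_neg] at *; omega

def tip (M : ℤ) : ℤ × ℤ := (M, 0)

def copies (M : ℤ) (A : Finset (ℤ × ℤ)) : Finset (ℤ × ℤ) :=
  (range 4).biUnion fun i => (A.filter Outward).image fun q => rot^[i] (tip M + q)

theorem mem_copies {M : ℤ} {A : Finset (ℤ × ℤ)} {p : ℤ × ℤ} :
    p ∈ copies M A ↔ ∃ i < 4, ∃ q ∈ A, Outward q ∧ rot^[i] (tip M + q) = p := by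
  simp [copies, and_assoc]

theorem tip_add_mem_copies {M : ℤ} {A : Finset (ℤ × ℤ)} {q : ℤ × ℤ} (hq : q ∈ A) (hO : Outward q) :
    tip M + q ∈ copies M A :=
  mem_copies.2 ⟨0, by norm_num, q, hq, hO, rfl⟩

theorem mem_copies_iff_exists_rot_iterate {M : ℤ} {A : Finset (ℤ × ℤ)} {p : ℤ × ℤ} :
    p ∈ copies M A ↔ ∃ i, ∃ q ∈ A, Outward q ∧ rot^[i] p = tip M + q := by
  rw [mem_copies]
  constructor
  · rintro ⟨i, -, q, hq, hO, rfl⟩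
    exact ⟨3 * i, q, hq, hO, rot_iterate_three_mul_apply i _⟩
  · rintro ⟨i, q, hq, hO, h⟩
    refine ⟨3 * i % 4, Nat.mod_lt _ (by norm_num), q, hq, hO, ?_⟩
    rw [rot_iterate_mod_four, ← h, rot_iterate_three_mul_apply]

theorem copies_mono {M : ℤ} {A B : Finset (ℤ × ℤ)} (h : A ⊆ B) : copies M A ⊆ copies M B :=
  biUnion_mono fun _ _ => image_subset_image (filter_subset_filter _ h)

theorem mem_copies_zero {M : ℤ} {p : ℤ × ℤ} :
    p ∈ copies M {(0, 0)} ↔ p = (M, 0) ∨ p = (0, M) ∨ p = (-M, 0) ∨ p = (0, -M) := by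
  simp only [mem_copies, mem_singleton, exists_eq_left, Outward, abs_zero, neg_zero, le_refl,
    true_and]
  constructor
  · rintro ⟨i, hi, rfl⟩
    interval_cases i <;> simp [tip, rot]
  · rintro (rfl | rfl | rfl | rfl)
    exacts [⟨0, by norm_num, by simp [tip]⟩, ⟨1, by norm_num, by simp [tip, rot]⟩,
      ⟨2, by norm_num, by simp [tip, rot]⟩, ⟨3, by norm_num, by simp [tip, rot]⟩]

theorem abs_lt_of_norm1_lt {M : ℤ} {q : ℤ × ℤ} (hqM : norm1 q < M) : |q.2| < M + q.1 := by
  unfold norm1 at hqM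
  simp only [abs_eq_max_neg] at *; omega

theorem abs_lt_add_of_mem_vnNbrs {M : ℤ} {q q' : ℤ × ℤ} (hq' : |q'.2| < M + q'.1)
    (hq : q ∈ vnNbrs q') (hdiag : |M + q.1| ≠ |q.2|) : |q.2| < M + q.1 := by
  rcases mem_vnNbrs.1 hq with rfl | rfl | rfl | rfl <;>
    · simp only [abs_eq_max_neg] at *; omega

theorem le_norm1_of_mem_copies {M : ℤ} {A : Finset (ℤ × ℤ)} {p : ℤ × ℤ}
    (hp : p ∈ copies M A) : M ≤ norm1 p := by
  obtain ⟨i, -, q, -, hq, rfl⟩ := mem_copies.1 hp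
  rw [norm1_rot_iterate]
  unfold Outward norm1 at *
  simp only [tip, Prod.fst_add, Prod.snd_add, abs_eq_max_neg] at *; omega

theorem card_copies {M : ℤ} {A : Finset (ℤ × ℤ)} (hA : ∀ q ∈ A, norm1 q < M) :
    #(copies M A) = 4 * #(A.filter Outward) := by
  have hinj (i : ℕ) : Function.Injective fun q => rot^[i] (tip M + q) :=
    (rot_injective.iterate i).comp (add_right_injective _)
  have hwedge : ∀ q ∈ A.filter Outward, |(tip M + q).2| < (tip M + q).1 := fun q hq => by
    simpa [tip, add_comm] using abs_lt_of_norm1_lt (hA q (mem_filter.1 hq).1)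
  rw [copies, card_biUnion, sum_congr rfl fun i _ => card_image_of_injective _ (hinj i),
    sum_const, card_range, smul_eq_mul]
  intro i hi i' hi' hii'
  simp only [Function.onFun, disjoint_left, mem_image]
  rintro _ ⟨q, hq, rfl⟩ ⟨q', hq', h⟩
  exact hii' (eq_of_rot_iterate_eq (by simpa using hi') (by simpa using hi)
    (hwedge q' hq') (hwedge q hq).le h).symm

theorem four_mul_card_filter_outward {B : Finset (ℤ × ℤ)} (hB : ∀ p, rot p ∈ B ↔ p ∈ B)
    (hdiag : ∀ p ∈ B, |p.1| ≠ |p.2|) : 4 * #(B.filter Outward) = 3 * #B := by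
  have hBi (i : ℕ) (p : ℤ × ℤ) : rot^[i] p ∈ B ↔ p ∈ B := by
    induction i generalizing p with
    | zero => rfl
    | succ i ih => rw [Function.iterate_succ_apply, ih, hB]
  have hcard (i : ℕ) : #(B.filter fun p => Outward (rot^[i] p)) = #(B.filter Outward) := by
    refine card_nbij' rot^[i] rot^[3 * i] ?_ ?_ ?_ ?_
    · intro p hp; simp_all
    · intro p hp; simp_all [rot_iterate_apply_three_mul]
    · intro p _; exact rot_iterate_three_mul_apply i p
    · intro p _; exact rot_iterate_apply_three_mul i p
  have hthree : ∀ p ∈ B, ∑ i ∈ range 4, (if Outward (rot^[i] p) then 1 else 0) = 3 := by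
    intro p hp
    have := hdiag p hp
    simp only [sum_range_succ, range_zero, sum_empty, zero_add]
    split_ifs <;>
      simp only [Outward, rot, Function.iterate_succ_apply', Function.iterate_zero_apply,
        abs_eq_max_neg] at * <;>
      omega
  calc 4 * #(B.filter Outward)
      = ∑ i ∈ range 4, #(B.filter fun p => Outward (rot^[i] p)) := by simp [hcard]
    _ = ∑ p ∈ B, ∑ i ∈ range 4, (if Outward (rot^[i] p) then 1 else 0) := by
        simp only [card_filter]; exact sum_comm
    _ = 3 * #B := by rw [sum_congr rfl hthree, sum_const, smul_eq_mul, mul_comm]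

structure SelfSimilarAt (S : ℕ → Finset (ℤ × ℤ)) (M : ℕ) : Prop where
  layer : ∀ p, norm1 p + 1 = M → p ∈ S M
  decomp : ∀ j ≤ M, S (M + j) = S M ∪ copies M (S j)

structure IsUlamWarburton (S : ℕ → Finset (ℤ × ℤ)) : Prop where
  zero : S 0 = ∅
  one : S 1 = {(0, 0)}
  succ : ∀ n, 1 ≤ n → ∀ p : ℤ × ℤ,
    p ∈ S (n + 1) ↔ p ∈ S n ∨ (p ∉ S n ∧ (vnNbrs p ∩ S n).card = 1)

namespace IsUlamWarburton

variable {S : ℕ → Finset (ℤ × ℤ)} (hS : IsUlamWarburton S)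
include hS

theorem mem_succ {n : ℕ} (hn : 1 ≤ n) {p : ℤ × ℤ} :
    p ∈ S (n + 1) ↔ p ∈ S n ∨ #(vnNbrs p ∩ S n) = 1 := by
  rw [hS.succ n hn]; tauto

theorem card_vnNbrs_inter_of_mem_sdiff {n : ℕ} (hn : 1 ≤ n) {p : ℤ × ℤ}
    (hp : p ∈ S (n + 1) \ S n) : #(vnNbrs p ∩ S n) = 1 := by
  rw [mem_sdiff, hS.mem_succ hn] at hp; tauto

theorem monotone : Monotone S := monotone_nat_of_le_succ fun n => by
  rcases Nat.eq_zero_or_pos n with rfl | hn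
  · simp [hS.zero]
  · exact fun p hp => (hS.mem_succ hn).2 (Or.inl hp)

theorem zero_mem {n : ℕ} (hn : 1 ≤ n) : ((0 : ℤ), (0 : ℤ)) ∈ S n :=
  hS.monotone hn (by simp [hS.one])

theorem norm1_lt {n : ℕ} {p : ℤ × ℤ} (hp : p ∈ S n) : norm1 p < n := by
  induction n generalizing p with
  | zero => simp [hS.zero] at hp
  | succ n ih =>
    rcases Nat.eq_zero_or_pos n with rfl | hn
    · simp [hS.one] at hp; simp [hp, norm1]
    · rcases (hS.mem_succ hn).1 hp with hp | hp
      · exact (ih hp).trans (by simp)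
      · obtain ⟨r, hr⟩ := card_pos.1 (hp.symm ▸ Nat.one_pos)
        rw [mem_inter] at hr
        have := norm1_le_of_mem_vnNbrs hr.1
        have := ih hr.2
        push_cast; omega

theorem map_mem_iff {f : ℤ × ℤ → ℤ × ℤ} (hf : Function.Injective f) (h0 : f (0, 0) = (0, 0))
    (hnbrs : ∀ p, vnNbrs (f p) = (vnNbrs p).image f) (n : ℕ) (p : ℤ × ℤ) :
    f p ∈ S n ↔ p ∈ S n := by
  induction n generalizing p with
  | zero => simp [hS.zero]
  | succ n ih =>
    rcases Nat.eq_zero_or_pos n with rfl | hn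
    · rw [hS.one, mem_singleton, mem_singleton]
      exact ⟨fun h => hf (h.trans h0.symm), fun h => h ▸ h0⟩
    · rw [hS.mem_succ hn, hS.mem_succ hn, ih, card_vnNbrs_map_inter hf (hnbrs p) ih]

theorem rot_iterate_mem_iff (i n : ℕ) (p : ℤ × ℤ) : rot^[i] p ∈ S n ↔ p ∈ S n :=
  hS.map_mem_iff (rot_injective.iterate i) (Function.iterate_fixed (by simp [rot]) i)
    (vnNbrs_rot_iterate i) n p

theorem card_vnNbrs_rot_iterate_inter (i n : ℕ) (p : ℤ × ℤ) :
    #(vnNbrs (rot^[i] p) ∩ S n) = #(vnNbrs p ∩ S n) :=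
  card_vnNbrs_map_inter (rot_injective.iterate i) (vnNbrs_rot_iterate i p)
    (hS.rot_iterate_mem_iff i n)

theorem card_vnNbrs_inter_ne_one {p : ℤ × ℤ} (hp : |p.1| = |p.2|) (n : ℕ) :
    #(vnNbrs p ∩ S n) ≠ 1 := by
  wlog hdiag : p.1 = p.2 generalizing p
  · rw [← hS.card_vnNbrs_rot_iterate_inter 1]
    refine this (by simpa [rot, eq_comm] using hp) ?_
    rcases abs_eq_abs.1 hp with h | h
    · exact absurd h hdiag
    · simp only [Function.iterate_one, rot]; omega
  have hswap (a b : ℤ) : (b, a) ∈ S n ↔ (a, b) ∈ S n :=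
    hS.map_mem_iff Prod.swap_injective rfl vnNbrs_swap n (a, b)
  rw [← filter_mem_eq_inter, card_filter_vnNbrs, ← hdiag]
  simp only [← hswap p.1 (p.1 - 1), ← hswap p.1 (p.1 + 1)]
  split_ifs <;> omega

theorem abs_ne_abs_of_mem_sdiff {n : ℕ} (hn : 1 ≤ n) {p : ℤ × ℤ} (hp : p ∈ S (n + 1) \ S n) :
    |p.1| ≠ |p.2| :=
  fun h => hS.card_vnNbrs_inter_ne_one h n (hS.card_vnNbrs_inter_of_mem_sdiff hn hp)

theorem tip_add_mem_union_copies_iff {M j : ℕ} (hjM : j ≤ M) {q : ℤ × ℤ} (hq : Outward q)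
    (hqe : |q.2| ≤ M + q.1) : tip M + q ∈ S M ∪ copies M (S j) ↔ q ∈ S j := by
  have hnotS : tip M + q ∉ S M := fun h => by
    have := hS.norm1_lt h
    unfold Outward norm1 at *
    simp only [tip, Prod.fst_add, Prod.snd_add, abs_eq_max_neg] at *; omega
  rw [mem_union, or_iff_right hnotS, mem_copies]
  constructor
  · rintro ⟨i, hi, q', hq', -, h⟩
    have hwedge : |(tip M + q').2| < (tip M + q').1 := by
      simpa [tip, add_comm] using
        abs_lt_of_norm1_lt ((hS.norm1_lt hq').trans_le (Int.ofNat_le.2 hjM))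
    obtain rfl : i = 0 := eq_of_rot_iterate_eq (i' := 0) hi (by norm_num) hwedge
      (by simpa [tip, add_comm] using hqe) h
    rwa [← add_left_cancel h]
  · exact fun h => ⟨0, by norm_num, q, h, hq, rfl⟩

theorem card_vnNbrs_tip_add_inter {M j : ℕ} (hjM : j ≤ M) {q : ℤ × ℤ} (hq : -|q.2| < q.1)
    (hqe : |q.2| < M + q.1) :
    #(vnNbrs (tip M + q) ∩ (S M ∪ copies M (S j))) = #(vnNbrs q ∩ S j) := by
  rw [vnNbrs_add, ← filter_mem_eq_inter, filter_image,
    card_image_of_injective _ (add_right_injective _), ← filter_mem_eq_inter]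
  refine congrArg card (filter_congr fun r hr =>
    hS.tip_add_mem_union_copies_iff hjM (outward_of_mem_vnNbrs hq hr) ?_)
  rcases mem_vnNbrs.1 hr with rfl | rfl | rfl | rfl <;>
    · simp only [abs_eq_max_neg] at *; omega

theorem tip_add_mem_of_mem_sdiff {M j : ℕ} (hj : 1 ≤ j) (hjM : j ≤ M)
    (hdec : S (M + j) = S M ∪ copies M (S j)) {q : ℤ × ℤ} (hq : q ∈ S (j + 1) \ S j)
    (hO : Outward q) (hqe : |q.2| < M + q.1) : tip M + q ∈ S (M + j + 1) := by
  have hdiag := hS.abs_ne_abs_of_mem_sdiff hj hq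
  have hq' : -|q.2| < q.1 := by
    unfold Outward at hO; simp only [abs_eq_max_neg] at *; omega
  rw [hS.mem_succ (by omega), hdec, hS.tip_add_mem_union_copies_iff hjM hO hqe.le,
    hS.card_vnNbrs_tip_add_inter hjM hq' hqe]
  exact Or.inr (hS.card_vnNbrs_inter_of_mem_sdiff hj hq)

theorem exists_eq_tip_add_of_mem_sdiff {M j : ℕ} (hlayer : ∀ p, norm1 p + 1 = M → p ∈ S M)
    (hj : 1 ≤ j) (hjM : j ≤ M) (hdec : S (M + j) = S M ∪ copies M (S j)) {p : ℤ × ℤ}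
    (hp : p ∈ S (M + j + 1) \ S (M + j)) {q' : ℤ × ℤ} (hq' : q' ∈ S j) (hO' : Outward q')
    (hn : tip M + q' ∈ vnNbrs p) : ∃ q, p = tip M + q ∧ Outward q ∧ q ∈ S (j + 1) \ S j := by
  have hdiag := hS.abs_ne_abs_of_mem_sdiff (by omega) hp
  have hcnt := hS.card_vnNbrs_inter_of_mem_sdiff (by omega) hp
  have hpS := (mem_sdiff.1 hp).2
  rw [hdec] at hcnt hpS
  obtain ⟨q, rfl⟩ : ∃ q, p = tip M + q := ⟨p - tip M, by abel⟩
  have hqn : q ∈ vnNbrs q' := by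
    rw [mem_vnNbrs_comm, vnNbrs_add, mem_image] at hn
    obtain ⟨r, hr, hrq⟩ := hn
    rwa [← add_left_cancel hrq]
  have hqe : |q.2| < M + q.1 := abs_lt_add_of_mem_vnNbrs
    (abs_lt_of_norm1_lt ((hS.norm1_lt hq').trans_le (Int.ofNat_le.2 hjM))) hqn
    (by simpa [tip] using hdiag)
  have hq : -|q.2| < q.1 := by
    rcases outward_or_of_mem_vnNbrs hO' hqn with hO | hwall
    · refine lt_of_le_of_ne hO fun hbd => ?_
      -- on the boundary of the copy, `p` has a second ON neighbour in the layer of `S M`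
      have ha : tip M + (q.1 - 1, q.2) ∈ S M := hlayer _ (by
        simp only [norm1, tip, Prod.fst_add, Prod.snd_add, abs_eq_max_neg] at *; omega)
      have hc : tip M + q' ∈ copies M (S j) := tip_add_mem_copies hq' hO'
      have : 1 < #(vnNbrs (tip M + q) ∩ (S M ∪ copies M (S j))) := one_lt_card.2
        ⟨_, mem_inter.2 ⟨by rw [vnNbrs_add]; exact mem_image_of_mem _ (by simp [vnNbrs]),
          mem_union_left _ ha⟩,
          _, mem_inter.2 ⟨hn, mem_union_right _ hc⟩,
          fun h => (hS.norm1_lt ha).not_ge (h ▸ le_norm1_of_mem_copies hc)⟩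
      omega
    · refine absurd (mem_union_left _ (hlayer _ ?_)) hpS
      simp only [norm1, tip, Prod.fst_add, Prod.snd_add, abs_eq_max_neg] at *; omega
  have hqS : q ∉ S j := fun h => hpS ((hS.tip_add_mem_union_copies_iff hjM hq.le hqe.le).2 h)
  rw [hS.card_vnNbrs_tip_add_inter hjM hq hqe] at hcnt
  exact ⟨q, rfl, hq.le, mem_sdiff.2 ⟨(hS.mem_succ hj).2 (Or.inr hcnt), hqS⟩⟩

theorem mem_copies_of_mem_sdiff {M j : ℕ} (hlayer : ∀ p, norm1 p + 1 = M → p ∈ S M)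
    (hj : 1 ≤ j) (hjM : j ≤ M) (hdec : S (M + j) = S M ∪ copies M (S j)) {p : ℤ × ℤ}
    (hp : p ∈ S (M + j + 1) \ S (M + j)) : p ∈ copies M (S (j + 1) \ S j) := by
  by_cases hnc : ∃ n ∈ vnNbrs p, n ∈ copies M (S j)
  · obtain ⟨n, hn, hnc⟩ := hnc
    obtain ⟨i, q', hq', hO', hi⟩ := mem_copies_iff_exists_rot_iterate.1 hnc
    have hpi : rot^[i] p ∈ S (M + j + 1) \ S (M + j) := by
      simpa only [mem_sdiff, hS.rot_iterate_mem_iff] using hp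
    have hni : tip M + q' ∈ vnNbrs (rot^[i] p) := by
      rw [← hi, vnNbrs_rot_iterate]; exact mem_image_of_mem _ hn
    obtain ⟨q, hq, hO, hqS⟩ := hS.exists_eq_tip_add_of_mem_sdiff hlayer hj hjM hdec hpi hq' hO' hni
    exact mem_copies_iff_exists_rot_iterate.2 ⟨i, q, hqS, hO, hq⟩
  · -- otherwise `p` would already have switched on at stage `M + 1`
    have hcnt := hS.card_vnNbrs_inter_of_mem_sdiff (by omega) hp
    have hinter : vnNbrs p ∩ S (M + j) = vnNbrs p ∩ S M := by
      rw [hdec, inter_union_distrib_left, union_eq_left]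
      exact fun r hr => absurd ⟨r, (mem_inter.1 hr).1, (mem_inter.1 hr).2⟩ hnc
    have hpS := (mem_sdiff.1 hp).2
    rw [hinter] at hcnt
    exact absurd (hS.monotone (by omega) ((hS.mem_succ (by omega)).2 (Or.inr hcnt))) hpS

theorem decomp_succ {M j : ℕ} (hlayer : ∀ p, norm1 p + 1 = M → p ∈ S M) (hj : 1 ≤ j)
    (hjM : j < M) (hdec : S (M + j) = S M ∪ copies M (S j)) :
    S (M + (j + 1)) = S M ∪ copies M (S (j + 1)) := by
  rw [← add_assoc]
  ext p
  constructor
  · intro hp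
    by_cases hpj : p ∈ S (M + j)
    · rw [hdec] at hpj
      exact union_subset_union subset_rfl (copies_mono (hS.monotone (by omega))) hpj
    · exact mem_union_right _ (copies_mono sdiff_subset
        (hS.mem_copies_of_mem_sdiff hlayer hj hjM.le hdec (mem_sdiff.2 ⟨hp, hpj⟩)))
  · intro hp
    rcases mem_union.1 hp with hp | hp
    · exact hS.monotone (by omega) hp
    · obtain ⟨i, q, hq, hO, hi⟩ := mem_copies_iff_exists_rot_iterate.1 hp
      rw [← hS.rot_iterate_mem_iff i, hi]
      by_cases hqj : q ∈ S j
      · exact hS.monotone (by omega) (hdec ▸ mem_union_right _ (tip_add_mem_copies hqj hO))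
      · exact hS.tip_add_mem_of_mem_sdiff hj hjM.le hdec (mem_sdiff.2 ⟨hq, hqj⟩) hO
          (abs_lt_of_norm1_lt ((hS.norm1_lt hq).trans_le (by exact_mod_cast hjM)))

theorem decomp_double_one {M : ℕ} (hM : 1 ≤ M) (hlayer : ∀ p, norm1 p + 1 = M → p ∈ S M)
    (hdec1 : S (M + 1) = S M ∪ copies M (S 1)) (hdecM : S (M + M) = S M ∪ copies M (S M)) :
    S (M + M + 1) = S (M + M) ∪ copies (M + M : ℕ) (S 1) := by
  have htip : tip M ∈ S (M + 1) \ S M := by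
    refine mem_sdiff.2 ⟨?_, fun h => ?_⟩
    · rw [hdec1, hS.one]
      have := tip_add_mem_copies (M := M) (mem_singleton_self ((0 : ℤ), (0 : ℤ)))
        (by simp [Outward])
      rw [Prod.mk_zero_zero, add_zero] at this
      exact mem_union_right _ this
    · have := hS.norm1_lt h
      simp [tip, norm1] at this
  ext p
  constructor
  · intro hp
    by_cases hpM : p ∈ S (M + M)
    · exact mem_union_left _ hpM
    have hnew : p ∈ S (M + M + 1) \ S (M + M) := mem_sdiff.2 ⟨hp, hpM⟩
    have hdiag := hS.abs_ne_abs_of_mem_sdiff (by omega) hnew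
    obtain ⟨i, hi, q, hq, -, rfl⟩ :=
      mem_copies.1 (hS.mem_copies_of_mem_sdiff hlayer hM le_rfl hdecM hnew)
    rw [Ne, abs_eq_abs_rot_iterate_iff] at hdiag
    obtain ⟨hq, hqM⟩ := mem_sdiff.1 hq
    rw [hdec1, hS.one, mem_union, or_iff_right hqM, mem_copies_zero] at hq
    refine mem_union_right _
      (mem_copies.2 ⟨i, hi, (0, 0), hS.zero_mem le_rfl, by simp [Outward], ?_⟩)
    rcases hq with rfl | rfl | rfl | rfl
    · simp [tip]
    all_goals simp [tip] at hdiag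
  · intro hp
    rcases mem_union.1 hp with hp | hp
    · exact hS.monotone (by omega) hp
    · obtain ⟨i, q, hq, -, hi⟩ := mem_copies_iff_exists_rot_iterate.1 hp
      rw [hS.one, mem_singleton] at hq
      rw [hq] at hi
      rw [← hS.rot_iterate_mem_iff i, hi,
        show tip (M + M : ℕ) + (0, 0) = tip M + tip M by simp [tip]]
      exact hS.tip_add_mem_of_mem_sdiff hM le_rfl hdecM htip (by simp [tip, Outward])
        (by simp [tip]; omega)

theorem layer_double {M : ℕ} (hlayer : ∀ p, norm1 p + 1 = M → p ∈ S M)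
    (hdecM : S (M + M) = S M ∪ copies M (S M)) (p : ℤ × ℤ) (hp : norm1 p + 1 = (M + M : ℕ)) :
    p ∈ S (M + M) := by
  obtain ⟨i, hi⟩ := exists_rot_iterate_abs_le p
  have hnorm : norm1 (rot^[i] p) + 1 = (M + M : ℕ) := by rwa [norm1_rot_iterate]
  rw [← hS.rot_iterate_mem_iff i, hdecM]
  refine mem_union_right _ (mem_copies_iff_exists_rot_iterate.2
    ⟨0, rot^[i] p - tip M, hlayer _ ?_, ?_, by simp⟩)
  all_goals
    simp only [norm1, Outward, tip, Prod.fst_sub, Prod.snd_sub, sub_zero, abs_eq_max_neg] at *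
    push_cast at hnorm
    omega

theorem selfSimilarAt_one : SelfSimilarAt S 1 where
  layer p hp := by
    obtain rfl : p = (0, 0) := by
      simp only [norm1, abs_eq_max_neg, Nat.cast_one] at hp; ext <;> simp <;> omega
    exact hS.zero_mem le_rfl
  decomp j hj := by
    interval_cases j
    · simp [hS.zero, copies]
    have hcnt (p : ℤ × ℤ) : #(vnNbrs p ∩ {(0, 0)}) = 1 ↔ ((0 : ℤ), (0 : ℤ)) ∈ vnNbrs p := by
      by_cases h : ((0 : ℤ), (0 : ℤ)) ∈ vnNbrs p <;> simp [h]
    ext p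
    rw [hS.mem_succ le_rfl, hS.one, mem_union, mem_copies_zero, mem_singleton, hcnt, mem_vnNbrs]
    simp only [Prod.ext_iff]
    omega

theorem selfSimilarAt_double {M : ℕ} (h : SelfSimilarAt S M) (hM : 1 ≤ M) :
    SelfSimilarAt S (M + M) := by
  have hdecM := h.decomp M le_rfl
  have hlayer := hS.layer_double h.layer hdecM
  refine ⟨hlayer, fun j hj => ?_⟩
  induction j with
  | zero => simp [hS.zero, copies]
  | succ j ih =>
    rcases Nat.eq_zero_or_pos j with rfl | hj1
    · exact hS.decomp_double_one hM h.layer (h.decomp 1 hM) hdecM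
    · exact hS.decomp_succ hlayer hj1 (by omega) (ih (by omega))

theorem selfSimilarAt_two_pow (k : ℕ) : SelfSimilarAt S (2 ^ k) := by
  induction k with
  | zero => exact hS.selfSimilarAt_one
  | succ k ih => rw [pow_succ, mul_two]; exact hS.selfSimilarAt_double ih Nat.one_le_two_pow

theorem card_sdiff_of_selfSimilarAt {M j : ℕ} (h : SelfSimilarAt S M) (hj : 1 ≤ j)
    (hjM : j ≤ M) :
    #(S (M + j) \ S (M + j - 1)) = 4 * #((S j \ S (j - 1)).filter Outward) := by
  have hcard (i : ℕ) (hi : i ≤ M) : #(S (M + i)) = #(S M) + 4 * #((S i).filter Outward) := by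
    rw [h.decomp i hi, card_union_of_disjoint, card_copies]
    · exact fun q hq => (hS.norm1_lt hq).trans_le (by exact_mod_cast hi)
    · exact disjoint_left.2 fun p hpS hpC =>
        (hS.norm1_lt hpS).not_ge (le_norm1_of_mem_copies hpC)
  have hsub : S (j - 1) ⊆ S j := hS.monotone (Nat.sub_le j 1)
  have hfilter : (S j \ S (j - 1)).filter Outward =
      (S j).filter Outward \ (S (j - 1)).filter Outward := by
    ext p; simp only [mem_filter, mem_sdiff]; tauto
  rw [card_sdiff_of_subset (hS.monotone (by omega)), show M + j - 1 = M + (j - 1) by omega,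
    hcard j hjM, hcard (j - 1) (by omega), hfilter,
    card_sdiff_of_subset (filter_subset_filter _ hsub)]
  have := card_le_card (filter_subset_filter Outward hsub)
  omega

theorem four_mul_card_filter_outward_sdiff {j : ℕ} (hj : 2 ≤ j) :
    4 * #((S j \ S (j - 1)).filter Outward) = 3 * #(S j \ S (j - 1)) := by
  refine four_mul_card_filter_outward (fun p => ?_) fun p hp => ?_
  · simpa only [mem_sdiff, Function.iterate_one] using
      and_congr (hS.rot_iterate_mem_iff 1 j p) (not_congr (hS.rot_iterate_mem_iff 1 (j - 1) p))
  · obtain ⟨k, rfl⟩ : ∃ k, j = k + 1 := ⟨j - 1, by omega⟩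
    exact hS.abs_ne_abs_of_mem_sdiff (by omega) hp

end IsUlamWarburton

end UlamWarburton

open UlamWarburton

/-- **Theorem 3(i).** For the Ulam-Warburton cellular automaton, the number
`u n` of cells turned ON at stage `n` satisfies `u 0 = 0`, `u 1 = 1`, and for
every `k ≥ 0`, `u (2^k + 1) = 4` and `u (2^k + j) = 3 * u j` for
`2 ≤ j ≤ 2^k`. -/
theorem ulam_warburton_recurrence
    (S : ℕ → Finset (ℤ × ℤ))
    (hS0 : S 0 = ∅)
    (hS1 : S 1 = {((0 : ℤ), (0 : ℤ))})
    (hstep : ∀ n, 1 ≤ n → ∀ p : ℤ × ℤ,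
      p ∈ S (n + 1) ↔ p ∈ S n ∨ (p ∉ S n ∧ (vnNbrs p ∩ S n).card = 1))
    (u : ℕ → ℕ)
    (hu0 : u 0 = 0)
    (hu : ∀ n, 1 ≤ n → u n = (S n).card - (S (n - 1)).card) :
    u 0 = 0 ∧ u 1 = 1 ∧
      ∀ k, u (2 ^ k + 1) = 4 ∧
        ∀ j, 2 ≤ j → j ≤ 2 ^ k → u (2 ^ k + j) = 3 * u j := by
  have hS : IsUlamWarburton S := ⟨hS0, hS1, hstep⟩
  have hu' (n : ℕ) (hn : 1 ≤ n) : u n = #(S n \ S (n - 1)) := by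
    rw [hu n hn, card_sdiff_of_subset (hS.monotone (Nat.sub_le n 1))]
  refine ⟨hu0, by simp [hu' 1 le_rfl, hS0, hS1], fun k => ⟨?_, fun j hj hjk => ?_⟩⟩
  · rw [hu' _ (Nat.le_add_left 1 _), hS.card_sdiff_of_selfSimilarAt (hS.selfSimilarAt_two_pow k)
      le_rfl Nat.one_le_two_pow, hS0, hS1, sdiff_empty, filter_singleton,
      if_pos (by simp [Outward]), card_singleton]
  · rw [hu' _ (by omega), hu' j (by omega),
      hS.card_sdiff_of_selfSimilarAt (hS.selfSimilarAt_two_pow k) (by omega) hjk,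
      hS.four_mul_card_filter_outward_sdiff hj]
end

section
/- (Theorem 3(ii)) For the Ulam-Warburton cellular automaton, u(1) = 1 and, for every n >= 2, u(n) = 4 * 3^(wt(n-1) - 1). -/
/-- The binary weight of `n`: the number of 1s in the binary expansion of `n`. -/
def wt (n : ℕ) : ℕ := (Nat.digits 2 n).sum

/-!
The times at which cells turn ON are self-similar: doubling both coordinates doubles the time, a
cell with exactly one odd coordinate turns ON one stage after the earlier of its two even-even
neighbours, and a cell with two odd coordinates never turns ON. Taking these rules (with time
`|x| + |y|` on the axes) as a recursive definition of `birth`, one checks locally, by induction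
along the doubling, that `birth` obeys the automaton's rule: a cell `p ≠ 0` that turns ON has a
unique neighbour that turned ON before it, exactly one stage before, and a cell that never turns ON
never has exactly one ON neighbour.

The cells turning ON at stage `2m + 1` are the doubles of those turning ON at stage `m + 1`. For
`m ≥ 1`, each cell turning ON at stage `2m + 1` has exactly three neighbours turning ON at stage
`2m + 2`, namely all but its own parent, and each of those has a unique parent. So the numbers
`c m` of cells turning ON at stage `m + 1` satisfy `c (2m) = c m`, `c (2m + 1) = 3 c (2m)` and
`c 1 = 4`, whence `c m = 4 * 3 ^ (wt m - 1)`.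
-/

open Finset

lemma ENat.eq_natCast_of_two_mul_eq {t : ℕ∞} {k : ℕ} (h : 2 * t = k) :
    ∃ j : ℕ, t = j ∧ k = 2 * j := by
  induction t using ENat.recTopCoe with
  | top => simp at h
  | coe j => exact ⟨j, rfl, by exact_mod_cast h.symm⟩

lemma ENat.eq_natCast_of_one_add_two_mul_eq {t : ℕ∞} {k : ℕ} (h : 1 + 2 * t = k) :
    ∃ j : ℕ, t = j ∧ k = 1 + 2 * j := by
  induction t using ENat.recTopCoe with
  | top => simp at h
  | coe j => exact ⟨j, rfl, by exact_mod_cast h.symm⟩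

lemma ENat.eq_of_two_mul_eq_two_mul {u v : ℕ∞} (h : 2 * u = 2 * v) : u = v := by
  have hle {u v : ℕ∞} : 2 * u ≤ 2 * v → u ≤ v :=
    (ENat.mul_le_mul_left_iff two_ne_zero (by simp)).1
  exact le_antisymm (hle h.le) (hle h.ge)

lemma ENat.two_mul_eq_top_iff {t : ℕ∞} : 2 * t = ⊤ ↔ t = ⊤ := by
  induction t using ENat.recTopCoe with
  | top => simp [ENat.mul_top]
  | coe j =>
    exact iff_of_false (by exact_mod_cast ENat.natCast_ne_top (2 * j)) (ENat.natCast_ne_top j)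

lemma ENat.one_add_two_mul_lt_natCast_iff {t : ℕ∞} {n : ℕ} :
    1 + 2 * t < n ↔ t < (n / 2 : ℕ) := by
  induction t using ENat.recTopCoe with
  | top => simp [ENat.mul_top]
  | coe j => norm_cast; omega

lemma Finset.card_ne_one_of_forall_exists_ne {α : Type*} {s : Finset α}
    (h : ∀ a ∈ s, ∃ b ∈ s, b ≠ a) : #s ≠ 1 := by
  rw [Ne, card_eq_one]
  rintro ⟨a, rfl⟩
  obtain ⟨b, hb, hba⟩ := h a (mem_singleton_self a)
  exact hba (mem_singleton.1 hb)

lemma wt_two_mul (k : ℕ) : wt (2 * k) = wt k := by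
  rcases k.eq_zero_or_pos with rfl | hk
  · rfl
  · rw [wt, Nat.digits_def' one_lt_two (by omega)]
    simp [wt]

lemma wt_two_mul_add_one (k : ℕ) : wt (2 * k + 1) = wt k + 1 := by
  rw [wt, Nat.digits_def' one_lt_two (by omega), show (2 * k + 1) / 2 = k by omega]
  simp [wt, add_comm]

lemma wt_pos {k : ℕ} (hk : 0 < k) : 0 < wt k := by
  obtain ⟨j, rfl | rfl⟩ := Nat.even_or_odd' k
  · rw [wt_two_mul]; exact wt_pos (by omega)
  · rw [wt_two_mul_add_one]; omega

lemma mem_vnNbrs {p q : ℤ × ℤ} :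
    q ∈ vnNbrs p ↔
      q = (p.1 - 1, p.2) ∨ q = (p.1 + 1, p.2) ∨ q = (p.1, p.2 - 1) ∨ q = (p.1, p.2 + 1) := by
  simp [vnNbrs]

lemma mem_vnNbrs_comm {p q : ℤ × ℤ} : q ∈ vnNbrs p ↔ p ∈ vnNbrs q := by
  simp only [mem_vnNbrs, Prod.ext_iff]; omega

lemma card_vnNbrs (p : ℤ × ℤ) : #(vnNbrs p) = 4 := by
  rw [vnNbrs, card_insert_of_notMem, card_insert_of_notMem, card_insert_of_notMem,
    card_singleton] <;>
    simp [Prod.ext_iff] <;> omega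

lemma vnNbrs_two_mul (x y : ℤ) : vnNbrs (2 * x, 2 * y) = (vnNbrs (x, y)).image (· + (x, y)) := by
  simp only [vnNbrs, image_insert, image_singleton, Prod.mk_add_mk]
  ring_nf

/-- `birth p + 1` is the stage at which the cell `p` turns ON; `birth p = ⊤` if it never does. -/
noncomputable def birth : ℤ × ℤ → ℕ∞
  | (x, y) =>
    if x = 0 ∨ y = 0 then ((x.natAbs + y.natAbs : ℕ) : ℕ∞)
    else if x % 2 = 0 ∧ y % 2 = 0 then 2 * birth (x / 2, y / 2)
    else if y % 2 = 0 then 1 + 2 * min (birth ((x - 1) / 2, y / 2)) (birth ((x + 1) / 2, y / 2))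
    else if x % 2 = 0 then 1 + 2 * min (birth (x / 2, (y - 1) / 2)) (birth (x / 2, (y + 1) / 2))
    else ⊤
termination_by p => p.1.natAbs + p.2.natAbs
decreasing_by all_goals omega

lemma birth_of_eq_zero_or_eq_zero {x y : ℤ} (h : x = 0 ∨ y = 0) :
    birth (x, y) = (x.natAbs + y.natAbs : ℕ) := by
  rw [birth, if_pos h]

lemma birth_zero : birth 0 = 0 := by
  rw [show (0 : ℤ × ℤ) = (0, 0) from rfl, birth_of_eq_zero_or_eq_zero (Or.inl rfl)]
  rfl

lemma birth_two_mul (x y : ℤ) : birth (2 * x, 2 * y) = 2 * birth (x, y) := by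
  by_cases h : x = 0 ∨ y = 0
  · rw [birth_of_eq_zero_or_eq_zero h, birth_of_eq_zero_or_eq_zero (by omega)]
    norm_cast; omega
  · rw [birth, if_neg (by omega), if_pos (by omega)]
    simp

lemma birth_two_mul_add_one_two_mul (x y : ℤ) :
    birth (2 * x + 1, 2 * y) = 1 + 2 * min (birth (x, y)) (birth (x + 1, y)) := by
  by_cases h : y = 0
  · subst h
    simp only [birth_of_eq_zero_or_eq_zero (Or.inr rfl), mul_zero]
    rw [← Nat.mono_cast.map_min]; norm_cast; omega
  · rw [birth, if_neg (by omega), if_neg (by omega), if_pos (by omega)]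
    congr 4 <;> simp only [Prod.mk.injEq] <;> omega

lemma birth_two_mul_two_mul_add_one (x y : ℤ) :
    birth (2 * x, 2 * y + 1) = 1 + 2 * min (birth (x, y)) (birth (x, y + 1)) := by
  by_cases h : x = 0
  · subst h
    simp only [birth_of_eq_zero_or_eq_zero (Or.inl rfl), mul_zero]
    rw [← Nat.mono_cast.map_min]; norm_cast; omega
  · rw [birth, if_neg (by omega), if_neg (by omega), if_neg (by omega), if_pos (by omega)]
    congr 4 <;> simp only [Prod.mk.injEq] <;> omega

lemma birth_two_mul_add_one_two_mul_add_one (x y : ℤ) : birth (2 * x + 1, 2 * y + 1) = ⊤ := by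
  rw [birth, if_neg (by omega), if_neg (by omega), if_neg (by omega), if_neg (by omega)]

lemma natAbs_add_natAbs_le_birth (p : ℤ × ℤ) :
    (p.1.natAbs + p.2.natAbs : ℕ) ≤ birth p := by
  induction p using birth.induct with
  | case1 x y h => rw [birth_of_eq_zero_or_eq_zero h]
  | case2 x y h hxy ih =>
    rw [birth, if_neg h, if_pos hxy]
    calc ((x.natAbs + y.natAbs : ℕ) : ℕ∞) = 2 * ((x / 2).natAbs + (y / 2).natAbs : ℕ) := by
          norm_cast; omega
      _ ≤ _ := by gcongr
  | case3 x y h hxy hy ih₁ ih₂ =>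
    rw [birth, if_neg h, if_neg hxy, if_pos hy]
    calc ((x.natAbs + y.natAbs : ℕ) : ℕ∞)
        ≤ 1 + 2 * min (((((x - 1) / 2).natAbs + (y / 2).natAbs : ℕ)) : ℕ∞)
          ((((x + 1) / 2).natAbs + (y / 2).natAbs : ℕ) : ℕ∞) := by
          rw [← Nat.mono_cast.map_min]; norm_cast; omega
      _ ≤ _ := by gcongr
  | case4 x y h hxy hy hx ih₁ ih₂ =>
    rw [birth, if_neg h, if_neg hxy, if_neg hy, if_pos hx]
    calc ((x.natAbs + y.natAbs : ℕ) : ℕ∞)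
        ≤ 1 + 2 * min ((((x / 2).natAbs + ((y - 1) / 2).natAbs : ℕ)) : ℕ∞)
          (((x / 2).natAbs + ((y + 1) / 2).natAbs : ℕ) : ℕ∞) := by
          rw [← Nat.mono_cast.map_min]; norm_cast; omega
      _ ≤ _ := by gcongr
  | case5 x y h hxy hy hx => rw [birth, if_neg h, if_neg hxy, if_neg hy, if_neg hx]; exact le_top

lemma birth_parity {x y : ℤ} {k : ℕ} (h : birth (x, y) = k) : (k : ℤ) % 2 = (x + y) % 2 := by
  obtain ⟨a, rfl | rfl⟩ := Int.even_or_odd' x <;>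
    obtain ⟨b, rfl | rfl⟩ := Int.even_or_odd' y
  · rw [birth_two_mul] at h
    obtain ⟨j, -, rfl⟩ := ENat.eq_natCast_of_two_mul_eq h
    omega
  · rw [birth_two_mul_two_mul_add_one] at h
    obtain ⟨j, -, rfl⟩ := ENat.eq_natCast_of_one_add_two_mul_eq h
    omega
  · rw [birth_two_mul_add_one_two_mul] at h
    obtain ⟨j, -, rfl⟩ := ENat.eq_natCast_of_one_add_two_mul_eq h
    omega
  · simp [birth_two_mul_add_one_two_mul_add_one] at h

lemma birth_eq_top_of_mem_vnNbrs_of_birth_eq {p q : ℤ × ℤ} (hq : q ∈ vnNbrs p)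
    (h : birth q = birth p) : birth p = ⊤ := by
  by_contra hp
  lift birth p to ℕ using hp with k hk
  have := birth_parity hk.symm
  have := birth_parity h
  rcases mem_vnNbrs.1 hq with rfl | rfl | rfl | rfl <;> omega

lemma birth_add_of_mem_vnNbrs {x y : ℤ} {s : ℤ × ℤ} (hs : s ∈ vnNbrs (x, y)) :
    birth (s + (x, y)) = 1 + 2 * min (birth s) (birth (x, y)) := by
  rcases mem_vnNbrs.1 hs with rfl | rfl | rfl | rfl
  · rw [show (x - 1, y) + (x, y) = (2 * (x - 1) + 1, 2 * y) by ext <;> simp <;> ring,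
      birth_two_mul_add_one_two_mul, sub_add_cancel]
  · rw [show (x + 1, y) + (x, y) = (2 * x + 1, 2 * y) by ext <;> simp <;> ring,
      birth_two_mul_add_one_two_mul, min_comm]
  · rw [show (x, y - 1) + (x, y) = (2 * x, 2 * (y - 1) + 1) by ext <;> simp <;> ring,
      birth_two_mul_two_mul_add_one, sub_add_cancel]
  · rw [show (x, y + 1) + (x, y) = (2 * x, 2 * y + 1) by ext <;> simp <;> ring,
      birth_two_mul_two_mul_add_one, min_comm]

lemma birth_eq_zero_iff {p : ℤ × ℤ} : birth p = 0 ↔ p = 0 := by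
  refine ⟨fun h => ?_, fun h => h ▸ birth_zero⟩
  have := h ▸ natAbs_add_natAbs_le_birth p
  have : p.1.natAbs + p.2.natAbs = 0 := by exact_mod_cast nonpos_iff_eq_zero.1 this
  exact Prod.ext (by simp; omega) (by simp; omega)

/-- `q` is the neighbour that switches `p` on. -/
structure IsParent (p q : ℤ × ℤ) : Prop where
  mem : q ∈ vnNbrs p
  birth_add_one : birth q + 1 = birth p
  le_birth : ∀ r ∈ vnNbrs p, r ≠ q → birth p ≤ birth r

namespace IsParent

variable {x y : ℤ} {q : ℤ × ℤ}

lemma birth_add_self (hq : IsParent (x, y) q) : birth (q + (x, y)) + 1 = birth (2 * x, 2 * y) := by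
  rw [birth_add_of_mem_vnNbrs hq.mem, birth_two_mul, ← hq.birth_add_one, min_eq_left le_self_add]
  ring

lemma birth_add_of_ne (hq : IsParent (x, y) q) {s : ℤ × ℤ} (hs : s ∈ vnNbrs (x, y))
    (hsq : s ≠ q) :
    birth (s + (x, y)) = 1 + birth (2 * x, 2 * y) := by
  rw [birth_add_of_mem_vnNbrs hs, birth_two_mul, min_eq_right (hq.le_birth s hs hsq)]

lemma two_mul (hq : IsParent (x, y) q) : IsParent (2 * x, 2 * y) (q + (x, y)) := by
  refine ⟨?_, hq.birth_add_self, ?_⟩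
  · rw [vnNbrs_two_mul]; exact mem_image_of_mem _ hq.mem
  · intro r hr hrq
    rw [vnNbrs_two_mul, mem_image] at hr
    obtain ⟨s, hs, rfl⟩ := hr
    rw [hq.birth_add_of_ne hs (by rintro rfl; exact hrq rfl)]
    exact le_add_self

end IsParent

/-- The situation at a cell with exactly one odd coordinate, `a` and `b` being its two even-even
neighbours. -/
structure IsFlanked (p a b : ℤ × ℤ) : Prop where
  left_mem : a ∈ vnNbrs p
  right_mem : b ∈ vnNbrs p
  birth_eq_top_of_ne : ∀ r ∈ vnNbrs p, r ≠ a → r ≠ b → birth r = ⊤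
  birth_eq : birth p = 1 + min (birth a) (birth b)
  eq_top_of_birth_eq : birth a = birth b → birth a = ⊤

lemma isFlanked_two_mul_add_one_two_mul (x y : ℤ) :
    IsFlanked (2 * x + 1, 2 * y) (2 * x, 2 * y) (2 * (x + 1), 2 * y) where
  left_mem := by simp [mem_vnNbrs]
  right_mem := by simp [mem_vnNbrs, Prod.ext_iff]; omega
  birth_eq_top_of_ne r hr hra hrb := by
    rcases mem_vnNbrs.1 hr with rfl | rfl | rfl | rfl
    · simp at hra
    · simp [Prod.ext_iff] at hrb; omega
    · rw [show 2 * y - 1 = 2 * (y - 1) + 1 by ring, birth_two_mul_add_one_two_mul_add_one]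
    · rw [birth_two_mul_add_one_two_mul_add_one]
  birth_eq := by rw [birth_two_mul_add_one_two_mul, birth_two_mul, birth_two_mul, mul_min]
  eq_top_of_birth_eq h := by
    rw [birth_two_mul, birth_two_mul] at h
    rw [birth_two_mul, birth_eq_top_of_mem_vnNbrs_of_birth_eq (by simp [mem_vnNbrs])
      (ENat.eq_of_two_mul_eq_two_mul h).symm]
    rfl

lemma isFlanked_two_mul_two_mul_add_one (x y : ℤ) :
    IsFlanked (2 * x, 2 * y + 1) (2 * x, 2 * y) (2 * x, 2 * (y + 1)) where
  left_mem := by simp [mem_vnNbrs]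
  right_mem := by simp [mem_vnNbrs, Prod.ext_iff]; omega
  birth_eq_top_of_ne r hr hra hrb := by
    rcases mem_vnNbrs.1 hr with rfl | rfl | rfl | rfl
    · rw [show 2 * x - 1 = 2 * (x - 1) + 1 by ring, birth_two_mul_add_one_two_mul_add_one]
    · rw [birth_two_mul_add_one_two_mul_add_one]
    · simp at hra
    · simp [Prod.ext_iff] at hrb; omega
  birth_eq := by rw [birth_two_mul_two_mul_add_one, birth_two_mul, birth_two_mul, mul_min]
  eq_top_of_birth_eq h := by
    rw [birth_two_mul, birth_two_mul] at h
    rw [birth_two_mul, birth_eq_top_of_mem_vnNbrs_of_birth_eq (by simp [mem_vnNbrs])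
      (ENat.eq_of_two_mul_eq_two_mul h).symm]
    rfl

namespace IsFlanked

variable {p a b : ℤ × ℤ}

lemma exists_isParent (h : IsFlanked p a b) (hp : birth p ≠ ⊤) : ∃ q, IsParent p q := by
  wlog hab : birth a ≤ birth b generalizing a b
  · exact this ⟨h.right_mem, h.left_mem, fun r hr hrb hra => h.birth_eq_top_of_ne r hr hra hrb,
      by rw [h.birth_eq, min_comm], fun e => e ▸ h.eq_top_of_birth_eq e.symm⟩ (le_of_not_ge hab)
  have hpa : birth p = birth a + 1 := by rw [h.birth_eq, min_eq_left hab, add_comm]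
  have hlt : birth a < birth b := by
    refine lt_of_le_of_ne hab fun e => hp ?_
    rw [hpa, h.eq_top_of_birth_eq e, top_add]
  refine ⟨a, h.left_mem, hpa.symm, fun r hr hra => ?_⟩
  by_cases hrb : r = b
  · rw [hrb, hpa]
    exact Order.add_one_le_of_lt hlt
  · rw [h.birth_eq_top_of_ne r hr hra hrb]
    exact le_top

lemma birth_eq_top_of_mem_vnNbrs (h : IsFlanked p a b) (hp : birth p = ⊤) :
    ∀ r ∈ vnNbrs p, birth r = ⊤ := by
  rw [h.birth_eq] at hp
  have hmin : min (birth a) (birth b) = ⊤ := by simpa using hp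
  intro r hr
  by_cases hra : r = a
  · rw [hra]; exact (min_eq_top.1 hmin).1
  by_cases hrb : r = b
  · rw [hrb]; exact (min_eq_top.1 hmin).2
  exact h.birth_eq_top_of_ne r hr hra hrb

end IsFlanked

theorem exists_isParent : ∀ {p : ℤ × ℤ}, p ≠ 0 → birth p ≠ ⊤ → ∃ q, IsParent p q
  | (x, y), hp0, hp => by
    obtain ⟨a, rfl | rfl⟩ := Int.even_or_odd' x <;>
    obtain ⟨b, rfl | rfl⟩ := Int.even_or_odd' y
    · rw [birth_two_mul] at hp
      have hab : (a, b) ≠ 0 := fun h => hp0 (by rw [Prod.mk_eq_zero] at h ⊢; omega)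
      obtain ⟨q, hq⟩ := exists_isParent hab (mt ENat.two_mul_eq_top_iff.2 hp)
      exact ⟨_, hq.two_mul⟩
    · exact (isFlanked_two_mul_two_mul_add_one a b).exists_isParent hp
    · exact (isFlanked_two_mul_add_one_two_mul a b).exists_isParent hp
    · exact absurd (birth_two_mul_add_one_two_mul_add_one a b) hp
termination_by p => p.1.natAbs + p.2.natAbs
decreasing_by rw [Ne, Prod.mk_eq_zero] at hab; omega

lemma card_filter_birth_lt_two_mul {x y : ℤ} (hxy : birth (x, y) = ⊤) (n : ℕ) :
    #{r ∈ vnNbrs (2 * x, 2 * y) | birth r < n} =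
      #{s ∈ vnNbrs (x, y) | birth s < (n / 2 : ℕ)} := by
  rw [vnNbrs_two_mul, filter_image, card_image_of_injective _ (add_left_injective _)]
  congr 1
  refine filter_congr fun s hs => ?_
  rw [birth_add_of_mem_vnNbrs hs, hxy, min_top_right, ENat.one_add_two_mul_lt_natCast_iff]

-- Each neighbour born before stage `n` was switched on from a diagonal neighbour of
-- `(2 * x + 1, 2 * y + 1)`, which switches on a second neighbour no later.
lemma card_filter_birth_lt_two_mul_add_one_ne_one (x y : ℤ) (n : ℕ) :
    #{r ∈ vnNbrs (2 * x + 1, 2 * y + 1) | birth r < n} ≠ 1 := by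
  have key {u : ℕ∞} (h : 1 + 2 * u < n) (w : ℕ∞) :
      1 + 2 * min u w < n ∧ 1 + 2 * min w u < n :=
    ⟨lt_of_le_of_lt (by gcongr; exact min_le_left _ _) h,
      lt_of_le_of_lt (by gcongr; exact min_le_right _ _) h⟩
  have hW := birth_two_mul_two_mul_add_one x y
  have hE := birth_two_mul_two_mul_add_one (x + 1) y
  have hS := birth_two_mul_add_one_two_mul x y
  have hN := birth_two_mul_add_one_two_mul x (y + 1)
  have hnbrs : vnNbrs (2 * x + 1, 2 * y + 1) =
      {(2 * x, 2 * y + 1), (2 * (x + 1), 2 * y + 1), (2 * x + 1, 2 * y),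
        (2 * x + 1, 2 * (y + 1))} := by
    simp only [vnNbrs]; ring_nf
  rw [hnbrs]
  apply card_ne_one_of_forall_exists_ne
  simp only [mem_filter, mem_insert, mem_singleton]
  rintro r ⟨rfl | rfl | rfl | rfl, hlt⟩
  · rw [hW] at hlt
    rcases min_choice (birth (x, y)) (birth (x, y + 1)) with h | h <;> rw [h] at hlt
    · exact ⟨_, ⟨by simp, hS ▸ (key hlt _).1⟩, by simp only [ne_eq, Prod.ext_iff]; omega⟩
    · exact ⟨_, ⟨by simp, hN ▸ (key hlt _).1⟩, by simp only [ne_eq, Prod.ext_iff]; omega⟩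
  · rw [hE] at hlt
    rcases min_choice (birth (x + 1, y)) (birth (x + 1, y + 1)) with h | h <;> rw [h] at hlt
    · exact ⟨_, ⟨by simp, hS ▸ (key hlt _).2⟩, by simp only [ne_eq, Prod.ext_iff]; omega⟩
    · exact ⟨_, ⟨by simp, hN ▸ (key hlt _).2⟩, by simp only [ne_eq, Prod.ext_iff]; omega⟩
  · rw [hS] at hlt
    rcases min_choice (birth (x, y)) (birth (x + 1, y)) with h | h <;> rw [h] at hlt
    · exact ⟨_, ⟨by simp, hW ▸ (key hlt _).1⟩, by simp only [ne_eq, Prod.ext_iff]; omega⟩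
    · exact ⟨_, ⟨by simp, hE ▸ (key hlt _).1⟩, by simp only [ne_eq, Prod.ext_iff]; omega⟩
  · rw [hN] at hlt
    rcases min_choice (birth (x, y + 1)) (birth (x + 1, y + 1)) with h | h <;> rw [h] at hlt
    · exact ⟨_, ⟨by simp, hW ▸ (key hlt _).2⟩, by simp only [ne_eq, Prod.ext_iff]; omega⟩
    · exact ⟨_, ⟨by simp, hE ▸ (key hlt _).2⟩, by simp only [ne_eq, Prod.ext_iff]; omega⟩

theorem card_filter_birth_lt_ne_one :
    ∀ {p : ℤ × ℤ}, birth p = ⊤ → ∀ n : ℕ, #{r ∈ vnNbrs p | birth r < n} ≠ 1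
  | (x, y), hp, n => by
    obtain ⟨a, rfl | rfl⟩ := Int.even_or_odd' x <;>
    obtain ⟨b, rfl | rfl⟩ := Int.even_or_odd' y
    · have hab : birth (a, b) = ⊤ := by rwa [birth_two_mul, ENat.two_mul_eq_top_iff] at hp
      rw [card_filter_birth_lt_two_mul hab]
      exact card_filter_birth_lt_ne_one hab (n / 2)
    · rw [filter_false_of_mem fun r hr => by
        simp [(isFlanked_two_mul_two_mul_add_one a b).birth_eq_top_of_mem_vnNbrs hp r hr]]
      simp
    · rw [filter_false_of_mem fun r hr => by
        simp [(isFlanked_two_mul_add_one_two_mul a b).birth_eq_top_of_mem_vnNbrs hp r hr]]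
      simp
    · exact card_filter_birth_lt_two_mul_add_one_ne_one a b n
termination_by p => p.1.natAbs + p.2.natAbs
decreasing_by
  have : (a, b) ≠ 0 := fun h => by simp [h, birth_zero] at hab
  rw [Ne, Prod.mk_eq_zero] at this
  omega

lemma card_filter_birth_lt_eq_one_iff {p : ℤ × ℤ} {n : ℕ} (hn : 1 ≤ n)
    (hpn : n ≤ birth p) :
    #{r ∈ vnNbrs p | birth r < n} = 1 ↔ birth p = n := by
  by_cases htop : birth p = ⊤
  · simp [htop, card_filter_birth_lt_ne_one htop n]
  have hp0 : p ≠ 0 := by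
    rintro rfl
    rw [birth_zero] at hpn
    exact absurd hpn (by exact_mod_cast (by omega : ¬ n ≤ 0))
  obtain ⟨q, hq, hqp, hmin⟩ := exists_isParent hp0 htop
  have hsub : {r ∈ vnNbrs p | birth r < n} ⊆ {q} := fun r hr => by
    rw [mem_filter] at hr
    rw [mem_singleton]
    by_contra hrq
    exact (hpn.trans (hmin r hr.1 hrq)).not_gt hr.2
  have hqn : birth q < n ↔ birth p ≤ n := by
    rw [← hqp, ENat.add_one_le_iff fun h => htop (by rw [← hqp, h, top_add])]
  have hqmem : q ∈ {r ∈ vnNbrs p | birth r < n} ↔ birth q < n := by simp [hq]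
  rcases subset_singleton_iff.1 hsub with h | h
  · rw [h, card_empty]
    refine iff_of_false zero_ne_one fun e => ?_
    simpa [h] using hqmem.2 (hqn.2 e.le)
  · rw [h, card_singleton]
    exact iff_of_true rfl (le_antisymm (hqn.1 (hqmem.1 (h ▸ mem_singleton_self q))) hpn)

lemma mem_Icc_prod_Icc_of_birth_le {p : ℤ × ℤ} {m : ℕ} (h : birth p ≤ m) :
    p ∈ Icc (-(m : ℤ)) m ×ˢ Icc (-(m : ℤ)) m := by
  have : p.1.natAbs + p.2.natAbs ≤ m := by exact_mod_cast (natAbs_add_natAbs_le_birth p).trans h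
  simp only [mem_product, mem_Icc]
  omega

/-- The cells switched on by stage `n`. -/
noncomputable def bornBefore (n : ℕ) : Finset (ℤ × ℤ) :=
  {p ∈ Icc (-(n : ℤ)) n ×ˢ Icc (-(n : ℤ)) n | birth p < n}

/-- The cells switched on at stage `m + 1`. -/
noncomputable def bornAt (m : ℕ) : Finset (ℤ × ℤ) :=
  {p ∈ Icc (-(m : ℤ)) m ×ˢ Icc (-(m : ℤ)) m | birth p = m}

lemma mem_bornBefore {p : ℤ × ℤ} {n : ℕ} : p ∈ bornBefore n ↔ birth p < n :=
  mem_filter.trans (and_iff_right_of_imp fun h => mem_Icc_prod_Icc_of_birth_le h.le)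

lemma mem_bornAt {p : ℤ × ℤ} {m : ℕ} : p ∈ bornAt m ↔ birth p = m :=
  mem_filter.trans (and_iff_right_of_imp fun h => mem_Icc_prod_Icc_of_birth_le h.le)

lemma bornBefore_one : bornBefore 1 = {0} := by
  ext p
  rw [mem_bornBefore, mem_singleton, Nat.cast_one, Order.lt_one_iff, birth_eq_zero_iff]

lemma mem_bornBefore_succ {n : ℕ} (hn : 1 ≤ n) (p : ℤ × ℤ) :
    p ∈ bornBefore (n + 1) ↔
      p ∈ bornBefore n ∨ (p ∉ bornBefore n ∧ #(vnNbrs p ∩ bornBefore n) = 1) := by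
  have : vnNbrs p ∩ bornBefore n = {r ∈ vnNbrs p | birth r < n} := by
    ext r; simp [mem_bornBefore]
  rw [this, mem_bornBefore, mem_bornBefore, Nat.cast_add_one,
    ENat.lt_add_one_iff (ENat.natCast_ne_top n)]
  by_cases h : birth p < n
  · simp [h, h.le]
  · rw [not_lt] at h
    rw [card_filter_birth_lt_eq_one_iff hn h, le_antisymm_iff]
    simp [h]

lemma card_bornBefore_succ (n : ℕ) : #(bornBefore (n + 1)) = #(bornBefore n) + #(bornAt n) := by
  rw [← card_union_of_disjoint (disjoint_left.2 fun p hp hp' => ?_)]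
  · congr 1
    ext p
    rw [mem_union, mem_bornBefore, mem_bornBefore, mem_bornAt, Nat.cast_add_one,
      ENat.lt_add_one_iff (ENat.natCast_ne_top n), le_iff_lt_or_eq]
  · rw [mem_bornBefore] at hp
    rw [mem_bornAt] at hp'
    exact hp.ne hp'

lemma exists_eq_two_mul_of_birth_eq_two_mul {p : ℤ × ℤ} {m : ℕ}
    (h : birth p = (2 * m : ℕ)) :
    ∃ a b : ℤ, p = (2 * a, 2 * b) ∧ birth (a, b) = m := by
  obtain ⟨x, y⟩ := p
  have hpar := birth_parity h
  obtain ⟨a, rfl | rfl⟩ := Int.even_or_odd' x <;>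
    obtain ⟨b, rfl | rfl⟩ := Int.even_or_odd' y
  · rw [birth_two_mul] at h
    obtain ⟨j, hj, hjm⟩ := ENat.eq_natCast_of_two_mul_eq h
    exact ⟨a, b, rfl, by rw [hj]; congr 1; omega⟩
  · push_cast at hpar; omega
  · push_cast at hpar; omega
  · rw [birth_two_mul_add_one_two_mul_add_one] at h
    exact absurd h.symm (ENat.natCast_ne_top _)

lemma card_bornAt_two_mul (m : ℕ) : #(bornAt (2 * m)) = #(bornAt m) := by
  have : bornAt (2 * m) = (bornAt m).image fun p => (2 * p.1, 2 * p.2) := by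
    ext p
    simp only [mem_image, mem_bornAt]
    constructor
    · intro h
      obtain ⟨a, b, rfl, hab⟩ := exists_eq_two_mul_of_birth_eq_two_mul h
      exact ⟨(a, b), hab, rfl⟩
    · rintro ⟨⟨a, b⟩, hab, rfl⟩
      rw [birth_two_mul, hab]
      push_cast; rfl
  rw [this, card_image_of_injective]
  intro p q h
  simp only [Prod.ext_iff] at h ⊢
  omega

lemma bornAt_one : bornAt 1 = vnNbrs 0 := by
  ext ⟨x, y⟩
  rw [mem_bornAt]
  constructor
  · intro h
    have hle := h ▸ natAbs_add_natAbs_le_birth (x, y)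
    have hpar := birth_parity h
    have : x.natAbs + y.natAbs ≤ 1 := by exact_mod_cast hle
    simp only [mem_vnNbrs, Prod.ext_iff, Prod.fst_zero, Prod.snd_zero]
    push_cast at hpar
    omega
  · intro h
    rcases mem_vnNbrs.1 h with h | h | h | h <;> simp only [Prod.ext_iff] at h <;>
      rw [birth_of_eq_zero_or_eq_zero (by simp [h])] <;> simp [h]

lemma card_filter_bornAt_mem_vnNbrs {p : ℤ × ℤ} {k : ℕ} (hp : birth p = (k + 1 : ℕ)) :
    #{c ∈ bornAt k | c ∈ vnNbrs p} = 1 := by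
  have hp0 : p ≠ 0 := ne_of_apply_ne birth (by simp [hp, birth_zero])
  obtain ⟨q, hq, hqp, hmin⟩ := exists_isParent hp0 (hp ▸ ENat.natCast_ne_top _)
  rw [card_eq_one]
  refine ⟨q, ext fun c => ?_⟩
  simp only [mem_filter, mem_bornAt, mem_singleton]
  constructor
  · rintro ⟨hc, hcp⟩
    by_contra hcq
    have := hmin c hcp hcq
    rw [hp, hc] at this
    norm_cast at this
    omega
  · rintro rfl
    refine ⟨ENat.add_left_injective_of_ne_top ENat.one_ne_top ?_, hq⟩
    simp only [hqp, hp]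
    push_cast; rfl

lemma card_filter_bornAt_two_mul_add_one_mem_vnNbrs {a b : ℤ} {m : ℕ} (hm : 1 ≤ m)
    (hab : birth (a, b) = m) : #{p ∈ bornAt (2 * m + 1) | (2 * a, 2 * b) ∈ vnNbrs p} = 3 := by
  have hab0 : (a, b) ≠ 0 := ne_of_apply_ne birth (by rw [hab, birth_zero]; norm_cast; omega)
  obtain ⟨q, hq⟩ := exists_isParent hab0 (hab ▸ ENat.natCast_ne_top m)
  suffices {p ∈ bornAt (2 * m + 1) | (2 * a, 2 * b) ∈ vnNbrs p} =
      (vnNbrs (2 * a, 2 * b)).erase (q + (a, b)) by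
    rw [this, card_erase_of_mem hq.two_mul.mem, card_vnNbrs]
  ext p
  simp only [mem_filter, mem_erase, mem_bornAt]
  rw [mem_vnNbrs_comm]
  constructor
  · rintro ⟨hp, hpc⟩
    refine ⟨?_, hpc⟩
    rintro rfl
    have := hq.birth_add_self
    rw [hp, birth_two_mul, hab] at this
    norm_cast at this
    omega
  · rintro ⟨hne, hpc⟩
    refine ⟨?_, hpc⟩
    rw [vnNbrs_two_mul, mem_image] at hpc
    obtain ⟨s, hs, rfl⟩ := hpc
    rw [hq.birth_add_of_ne hs (by rintro rfl; exact hne rfl), birth_two_mul, hab]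
    push_cast; ring

lemma card_bornAt_two_mul_add_one {m : ℕ} (hm : 1 ≤ m) :
    #(bornAt (2 * m + 1)) = 3 * #(bornAt (2 * m)) := by
  have := card_mul_eq_card_mul (fun p c => c ∈ vnNbrs p) (m := 1) (n := 3)
    (fun p hp => card_filter_bornAt_mem_vnNbrs (mem_bornAt.1 hp)) fun c hc => by
      obtain ⟨a, b, rfl, hab⟩ := exists_eq_two_mul_of_birth_eq_two_mul (mem_bornAt.1 hc)
      exact card_filter_bornAt_two_mul_add_one_mem_vnNbrs hm hab
  simpa [mul_comm] using this

theorem card_bornAt {m : ℕ} (hm : 1 ≤ m) : #(bornAt m) = 4 * 3 ^ (wt m - 1) := by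
  induction m using Nat.strong_induction_on with
  | _ m ih =>
  obtain ⟨k, rfl | rfl⟩ := Nat.even_or_odd' m
  · rw [card_bornAt_two_mul, ih k (by omega) (by omega), wt_two_mul]
  · rcases Nat.eq_zero_or_pos k with rfl | hk
    · rw [bornAt_one, card_vnNbrs]; rfl
    · rw [card_bornAt_two_mul_add_one hk, card_bornAt_two_mul, ih k (by omega) hk,
        wt_two_mul_add_one, Nat.add_sub_cancel]
      conv_rhs => rw [← Nat.sub_add_cancel (wt_pos hk), pow_succ]
      ring

theorem ulam_warburton_formula_general
    (S : ℕ → Finset (ℤ × ℤ))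
    (hS0 : S 0 = ∅)
    (hS1 : S 1 = {((0 : ℤ), (0 : ℤ))})
    (hstep : ∀ n, 1 ≤ n → ∀ p : ℤ × ℤ,
      p ∈ S (n + 1) ↔ p ∈ S n ∨ (p ∉ S n ∧ (vnNbrs p ∩ S n).card = 1))
    (u : ℕ → ℕ)
    (hu : ∀ n, 1 ≤ n → u n = (S n).card - (S (n - 1)).card) :
    u 1 = 1 ∧ ∀ n, 2 ≤ n → u n = 4 * 3 ^ (wt (n - 1) - 1) := by
  have hS : ∀ n, 1 ≤ n → S n = bornBefore n := by
    intro n hn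
    induction n, hn using Nat.le_induction with
    | base => rw [hS1, bornBefore_one]; rfl
    | succ n hn ih => ext p; rw [hstep n hn, ih, mem_bornBefore_succ hn]
  refine ⟨by simp [hu 1 le_rfl, hS1, hS0], fun n hn => ?_⟩
  obtain ⟨m, rfl⟩ : ∃ m, n = m + 1 := ⟨n - 1, by omega⟩
  rw [hu _ (by omega), hS _ (by omega), Nat.add_sub_cancel, hS m (by omega), card_bornBefore_succ,
    Nat.add_sub_cancel_left, card_bornAt (by omega)]

/-- **Theorem 3(ii).** For the Ulam-Warburton cellular automaton, `u 1 = 1`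
and, for every `n ≥ 2`, `u n = 4 * 3^(wt (n-1) - 1)`. -/
theorem ulam_warburton_formula
    (S : ℕ → Finset (ℤ × ℤ))
    (hS0 : S 0 = ∅)
    (hS1 : S 1 = {((0 : ℤ), (0 : ℤ))})
    (hstep : ∀ n, 1 ≤ n → ∀ p : ℤ × ℤ,
      p ∈ S (n + 1) ↔ p ∈ S n ∨ (p ∉ S n ∧ (vnNbrs p ∩ S n).card = 1))
    (u : ℕ → ℕ)
    (hu0 : u 0 = 0)
    (hu : ∀ n, 1 ≤ n → u n = (S n).card - (S (n - 1)).card) :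
    u 1 = 1 ∧ ∀ n, 2 ≤ n → u n = 4 * 3 ^ (wt (n - 1) - 1) :=
  ulam_warburton_formula_general S hS0 hS1 hstep u hu
end

section
/- (Equation (EqHVE4)) Let R be a commutative ring and let delta be an element of R. For all natural numbers n and K with 2^K > n, the coefficient of x^n in the polynomial prod_{k=0}^{K-1} (1 + delta * x^(2^k)) in R[x] equals delta^(wt(n)). -/
/-!
Writing `P_K = ∏_{k<K} (1 + δ x^(2^k))`, peeling off the factor `k = 0` gives
`P_{K+1}(x) = (1 + δ x) P_K(x²)`. Hence the coefficient of `x^n` in `P_{K+1}` is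
`δ^(n % 2)` times the coefficient of `x^(n / 2)` in `P_K`, which matches the recursion
`wt n = n % 2 + wt (n / 2)` of the binary weight.
-/

open Polynomial

theorem wt_eq_mod_two_add_wt_div_two (n : ℕ) : wt n = n % 2 + wt (n / 2) := by
  rcases Nat.eq_zero_or_pos n with rfl | hn
  · rfl
  · rw [wt, Nat.digits_def' one_lt_two hn, List.sum_cons, wt]

section

variable {R : Type*} [CommSemiring R]

theorem coeff_expand_two_two_mul_add_one (p : R[X]) (m : ℕ) :
    (expand R 2 p).coeff (2 * m + 1) = 0 := by
  rw [coeff_expand two_pos, if_neg (by omega)]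

theorem coeff_one_add_C_mul_X_mul_expand_two (a : R) (p : R[X]) (n : ℕ) :
    ((1 + C a * X) * expand R 2 p).coeff n = a ^ (n % 2) * p.coeff (n / 2) := by
  rw [add_mul, one_mul, mul_assoc, coeff_add, coeff_C_mul]
  obtain ⟨m, rfl | rfl⟩ := Nat.even_or_odd' n
  · rw [Nat.mul_mod_right, Nat.mul_div_cancel_left m two_pos, coeff_expand_mul' two_pos]
    rcases m with _ | m
    · simp
    · rw [show 2 * (m + 1) = 2 * m + 1 + 1 by ring, coeff_X_mul,
        coeff_expand_two_two_mul_add_one]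
      simp
  · rw [coeff_X_mul, coeff_expand_mul' two_pos, coeff_expand_two_two_mul_add_one,
      Nat.mul_add_mod_self_left, Nat.mul_add_div two_pos]
    simp

theorem prod_range_succ_one_add_C_mul_X_pow_two_pow (a : R) (K : ℕ) :
    ∏ k ∈ Finset.range (K + 1), (1 + C a * X ^ 2 ^ k) =
      (1 + C a * X) * expand R 2 (∏ k ∈ Finset.range K, (1 + C a * X ^ 2 ^ k)) := by
  rw [Finset.prod_range_succ', mul_comm, map_prod]
  simp [pow_succ', pow_mul]

end

/-- **(EqHVE4).** Let `R` be a commutative ring and `δ ∈ R`.  For all `n, K`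
with `2^K > n`, the coefficient of `x^n` in `∏_{k=0}^{K-1} (1 + δ x^(2^k))`
equals `δ^(wt n)`. -/
theorem coeff_prod_one_add_delta_pow
    (R : Type*) [CommRing R] (δ : R) (n K : ℕ) (h : n < 2 ^ K) :
    (∏ k ∈ Finset.range K, (1 + C δ * X ^ (2 ^ k))).coeff n = δ ^ wt n := by
  induction K generalizing n with
  | zero =>
    obtain rfl : n = 0 := by simpa using h
    simp [wt]
  | succ K ih =>
    have hn : n / 2 < 2 ^ K := Nat.div_lt_of_lt_mul (by rwa [← pow_succ'])
    rw [prod_range_succ_one_add_C_mul_X_pow_two_pow, coeff_one_add_C_mul_X_mul_expand_two,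
      ih (n / 2) hn, wt_eq_mod_two_add_wt_div_two n, pow_add]
end

section
/- (Theorem 4) Let alpha, beta, gamma, delta be integers. For each n in N define a(n) to be the coefficient of x^n in the polynomial x*(alpha + beta*x) * prod_{k=1}^{K} (1 + gamma*x^(2^k - 1) + delta*x^(2^k)) in Z[x], where K is any natural number with 2^K > n; this coefficient is the same for every such K. Then a(0) = 0, a(1) = alpha, and for every k >= 1: a(2^k) = alpha*gamma + beta*delta^(k-1); a(2^k + i) = delta*a(i) + gamma*a(i+1) for all i with 1 <= i <= 2^k - 2; and a(2^(k+1) - 1) = delta*a(2^k - 1) + gamma*a(2^k) - alpha*gamma^2. -/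
/-!
Write `P_K` for the product with `K` factors. Multiplying `P_K` by
`1 + γ x^(2^(K+1) - 1) + δ x^(2^(K+1))` leaves the coefficients below `2^(K+1)` unchanged,
because `P_K` has no constant term; this is the independence of `K`. Above that, the coefficient
of `x^(2^(K+1) + j)` is `γ a(j+1) + δ a(j)` plus that of `P_K` itself, which vanishes for `j > 0`
since `deg P_K ≤ 2^(K+1)`, and is `β δ^K` for `j = 0`. The three recurrences are the cases
`j = 0`, `1 ≤ j ≤ 2^(K+1) - 2` and `j = 2^(K+1) - 1`.
-/

open Polynomial

/-- The polynomial `x (α + β x) ∏_{k=1}^{K} (1 + γ x^(2^k - 1) + δ x^(2^k))`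
in `ℤ[x]`. -/
noncomputable def thmProd (α β γ δ : ℤ) (K : ℕ) : Polynomial ℤ :=
  X * (C α + C β * X) *
    ∏ k ∈ Finset.Icc 1 K, (1 + C γ * X ^ (2 ^ k - 1) + C δ * X ^ (2 ^ k))

section Factor

variable {R : Type*} [Semiring R] (P : R[X]) (c d : R) {m : ℕ}

theorem coeff_mul_one_add_X_pow_of_lt (hP : P.coeff 0 = 0) {n : ℕ} (hn : n < m) :
    (P * (1 + C c * X ^ (m - 1) + C d * X ^ m)).coeff n = P.coeff n := by
  simp only [mul_add, mul_one, ← mul_assoc, coeff_add, coeff_mul_X_pow', coeff_mul_C,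
    if_neg (Nat.not_le.2 hn)]
  split_ifs with h
  · rw [show n - (m - 1) = 0 by omega, hP, zero_mul, add_zero, add_zero]
  · rw [add_zero, add_zero]

theorem coeff_mul_one_add_X_pow_add (hm : 0 < m) (j : ℕ) :
    (P * (1 + C c * X ^ (m - 1) + C d * X ^ m)).coeff (m + j) =
      P.coeff (m + j) + P.coeff (j + 1) * c + P.coeff j * d := by
  simp only [mul_add, mul_one, ← mul_assoc, coeff_add, coeff_mul_X_pow', coeff_mul_C,
    if_pos (show m - 1 ≤ m + j by omega), if_pos (Nat.le_add_right m j),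
    show m + j - (m - 1) = j + 1 by omega, Nat.add_sub_cancel_left]

end Factor

section Coefficients

variable (α β γ δ : ℤ)

theorem thmProd_zero : thmProd α β γ δ 0 = X * (C α + C β * X) := by
  rw [thmProd, Finset.Icc_eq_empty (by norm_num), Finset.prod_empty, mul_one]

theorem thmProd_succ (K : ℕ) :
    thmProd α β γ δ (K + 1) =
      thmProd α β γ δ K * (1 + C γ * X ^ (2 ^ (K + 1) - 1) + C δ * X ^ 2 ^ (K + 1)) := by
  rw [thmProd, Finset.prod_Icc_succ_top (Nat.le_add_left 1 K), ← mul_assoc, thmProd]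

theorem natDegree_thmProd_le (K : ℕ) : (thmProd α β γ δ K).natDegree ≤ 2 ^ (K + 1) := by
  induction K with
  | zero => rw [thmProd_zero]; compute_degree!
  | succ K ih =>
    rw [thmProd_succ]
    have hfactor : (1 + C γ * X ^ (2 ^ (K + 1) - 1) + C δ * X ^ 2 ^ (K + 1)).natDegree ≤
        2 ^ (K + 1) := by
      compute_degree!
    calc _ ≤ 2 ^ (K + 1) + 2 ^ (K + 1) := natDegree_mul_le.trans (add_le_add ih hfactor)
      _ = 2 ^ (K + 2) := by ring

theorem coeff_thmProd_of_two_pow_lt (K : ℕ) {n : ℕ} (hn : 2 ^ (K + 1) < n) :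
    (thmProd α β γ δ K).coeff n = 0 :=
  coeff_eq_zero_of_natDegree_lt ((natDegree_thmProd_le α β γ δ K).trans_lt hn)

theorem coeff_thmProd_zero (K : ℕ) : (thmProd α β γ δ K).coeff 0 = 0 := by
  rw [thmProd, mul_assoc, coeff_X_mul_zero]

theorem coeff_thmProd_succ_of_lt {K n : ℕ} (hn : n < 2 ^ (K + 1)) :
    (thmProd α β γ δ (K + 1)).coeff n = (thmProd α β γ δ K).coeff n := by
  rw [thmProd_succ]
  exact coeff_mul_one_add_X_pow_of_lt _ _ _ (coeff_thmProd_zero α β γ δ K) hn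

theorem coeff_thmProd_succ_two_pow_add (K j : ℕ) :
    (thmProd α β γ δ (K + 1)).coeff (2 ^ (K + 1) + j) =
      (thmProd α β γ δ K).coeff (2 ^ (K + 1) + j) + γ * (thmProd α β γ δ K).coeff (j + 1) +
        δ * (thmProd α β γ δ K).coeff j := by
  rw [thmProd_succ, coeff_mul_one_add_X_pow_add _ _ _ (Nat.two_pow_pos _), mul_comm γ,
    mul_comm δ]

theorem coeff_thmProd_one (K : ℕ) : (thmProd α β γ δ K).coeff 1 = α := by
  induction K with
  | zero =>
    rw [thmProd_zero, coeff_X_mul, coeff_add, coeff_C_zero, coeff_C_mul_X, if_neg zero_ne_one,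
      add_zero]
  | succ K ih => rw [coeff_thmProd_succ_of_lt _ _ _ _ (Nat.one_lt_two_pow K.succ_ne_zero), ih]

theorem coeff_thmProd_two_pow_succ (K : ℕ) :
    (thmProd α β γ δ K).coeff (2 ^ (K + 1)) = β * δ ^ K := by
  induction K with
  | zero =>
    rw [thmProd_zero, zero_add, pow_one, coeff_X_mul, coeff_add, coeff_C_mul_X, if_pos rfl,
      coeff_C_of_ne_zero one_ne_zero, zero_add, pow_zero, mul_one]
  | succ K ih =>
    have hpos := Nat.two_pow_pos (K + 1)
    rw [pow_succ 2 (K + 1), mul_two, coeff_thmProd_succ_two_pow_add, ih,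
      coeff_thmProd_of_two_pow_lt _ _ _ _ _ (by omega),
      coeff_thmProd_of_two_pow_lt _ _ _ _ _ (by omega)]
    ring

theorem coeff_thmProd_of_le {K K' n : ℕ} (hKK' : K ≤ K') (hn : n < 2 ^ (K + 1)) :
    (thmProd α β γ δ K').coeff n = (thmProd α β γ δ K).coeff n := by
  induction K', hKK' using Nat.le_induction with
  | base => rfl
  | succ K' hKK' ih =>
    have : 2 ^ (K + 1) ≤ 2 ^ (K' + 1) := Nat.pow_le_pow_right two_pos (by omega)
    rw [coeff_thmProd_succ_of_lt _ _ _ _ (hn.trans_le this), ih]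

/-- The sequence `a` of the theorem: since `n < 2 ^ n`, `K = n` is an admissible choice. -/
noncomputable def thmCoeff (n : ℕ) : ℤ := (thmProd α β γ δ n).coeff n

theorem coeff_thmProd_eq_thmCoeff {K n : ℕ} (hn : n < 2 ^ (K + 1)) :
    (thmProd α β γ δ K).coeff n = thmCoeff α β γ δ n := by
  rcases le_total K n with h | h
  · exact (coeff_thmProd_of_le α β γ δ h hn).symm
  · exact coeff_thmProd_of_le α β γ δ h
      (Nat.lt_two_pow_self.trans (Nat.pow_lt_pow_succ one_lt_two))

theorem thmCoeff_zero : thmCoeff α β γ δ 0 = 0 := coeff_thmProd_zero α β γ δ 0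

theorem thmCoeff_one : thmCoeff α β γ δ 1 = α := coeff_thmProd_one α β γ δ 1

theorem thmCoeff_two_pow_add {K j : ℕ} (hj : j < 2 ^ (K + 1)) :
    thmCoeff α β γ δ (2 ^ (K + 1) + j) =
      (thmProd α β γ δ K).coeff (2 ^ (K + 1) + j) + γ * (thmProd α β γ δ K).coeff (j + 1) +
        δ * thmCoeff α β γ δ j := by
  rw [← coeff_thmProd_eq_thmCoeff α β γ δ (K := K + 1) (by rw [pow_succ 2 (K + 1)]; omega),
    coeff_thmProd_succ_two_pow_add, coeff_thmProd_eq_thmCoeff α β γ δ hj]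

theorem thmCoeff_two_pow {k : ℕ} (hk : 0 < k) :
    thmCoeff α β γ δ (2 ^ k) = α * γ + β * δ ^ (k - 1) := by
  obtain ⟨K, rfl⟩ := Nat.exists_eq_add_one.mpr hk
  have h := thmCoeff_two_pow_add α β γ δ (j := 0) (Nat.two_pow_pos (K + 1))
  rw [add_zero] at h
  rw [h, coeff_thmProd_two_pow_succ, zero_add, coeff_thmProd_one, thmCoeff_zero,
    Nat.add_sub_cancel]
  ring

theorem thmCoeff_two_pow_add_of_le {k i : ℕ} (hi : 1 ≤ i) (hik : i ≤ 2 ^ k - 2) :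
    thmCoeff α β γ δ (2 ^ k + i) = δ * thmCoeff α β γ δ i + γ * thmCoeff α β γ δ (i + 1) := by
  obtain ⟨K, rfl⟩ : ∃ K, k = K + 1 := Nat.exists_eq_add_one.mpr <| Nat.pos_of_ne_zero <| by
    rintro rfl
    omega
  rw [thmCoeff_two_pow_add α β γ δ (by omega), coeff_thmProd_of_two_pow_lt _ _ _ _ _ (by omega),
    coeff_thmProd_eq_thmCoeff α β γ δ (by omega)]
  ring

theorem thmCoeff_two_pow_succ_sub_one {k : ℕ} (hk : 0 < k) :
    thmCoeff α β γ δ (2 ^ (k + 1) - 1) =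
      δ * thmCoeff α β γ δ (2 ^ k - 1) + γ * thmCoeff α β γ δ (2 ^ k) - α * γ ^ 2 := by
  obtain ⟨K, rfl⟩ := Nat.exists_eq_add_one.mpr hk
  have hpos := Nat.two_pow_pos (K + 1)
  have hsplit : 2 ^ (K + 1 + 1) - 1 = 2 ^ (K + 1) + (2 ^ (K + 1) - 1) := by
    rw [pow_succ 2 (K + 1)]; omega
  rw [hsplit, thmCoeff_two_pow_add α β γ δ (by omega), Nat.sub_add_cancel hpos,
    coeff_thmProd_of_two_pow_lt _ _ _ _ _ (by omega), coeff_thmProd_two_pow_succ,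
    thmCoeff_two_pow α β γ δ hk, Nat.add_sub_cancel]
  ring

end Coefficients

/-- **Theorem 4.** Let `α, β, γ, δ` be integers and for each `n` let `a n` be
the coefficient of `x^n` in `x (α + β x) ∏_{k=1}^{K} (1 + γ x^(2^k-1) + δ x^(2^k))`,
where `K` is any natural number with `2^K > n` (this coefficient is the same for
every such `K`).  Then `a 0 = 0`, `a 1 = α`, and for every `k ≥ 1`:
`a (2^k) = α γ + β δ^(k-1)`; `a (2^k + i) = δ a i + γ a (i+1)` for
`1 ≤ i ≤ 2^k - 2`; and `a (2^(k+1) - 1) = δ a (2^k - 1) + γ a (2^k) - α γ^2`. -/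
theorem coeff_recurrence
    (α β γ δ : ℤ) (a : ℕ → ℤ)
    (ha : ∀ n K, n < 2 ^ K → a n = (thmProd α β γ δ K).coeff n) :
    (∀ n K K', n < 2 ^ K → n < 2 ^ K' →
        (thmProd α β γ δ K).coeff n = (thmProd α β γ δ K').coeff n) ∧
    a 0 = 0 ∧ a 1 = α ∧
      ∀ k, 1 ≤ k →
        a (2 ^ k) = α * γ + β * δ ^ (k - 1) ∧
        (∀ i, 1 ≤ i → i ≤ 2 ^ k - 2 → a (2 ^ k + i) = δ * a i + γ * a (i + 1)) ∧
        a (2 ^ (k + 1) - 1) = δ * a (2 ^ k - 1) + γ * a (2 ^ k) - α * γ ^ 2 := by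
  have hlt {n K : ℕ} (h : n < 2 ^ K) : n < 2 ^ (K + 1) := h.trans (Nat.pow_lt_pow_succ one_lt_two)
  obtain rfl : a = thmCoeff α β γ δ := funext fun n => ha n n Nat.lt_two_pow_self
  refine ⟨fun n K K' hK hK' => ?_, thmCoeff_zero .., thmCoeff_one .., fun k hk =>
    ⟨thmCoeff_two_pow α β γ δ hk, fun i hi hik => thmCoeff_two_pow_add_of_le α β γ δ hi hik,
      thmCoeff_two_pow_succ_sub_one α β γ δ hk⟩⟩
  rw [coeff_thmProd_eq_thmCoeff α β γ δ (hlt hK), coeff_thmProd_eq_thmCoeff α β γ δ (hlt hK')]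
end

section
/- (Theorem 5, corner generating function) For every n in N and every K with 2^K > n, c(n) equals the coefficient of x^n in the polynomial x*(1 + x) * prod_{k=1}^{K} (1 + x^(2^k - 1) + 2*x^(2^k)) in Z[x]. -/
/-!
Write `P_K = X (1 + X) ∏_{k=1}^{K} (1 + X^(2^k - 1) + 2 X^(2^k))` and `M = 2^(K+1)`.  Then `P_K` has
degree `M` with top coefficient `2^K`, and its constant term is `0`.  Multiplying by
`1 + X^(M-1) + 2 X^M` leaves the coefficients below `M` unchanged, while for `0 ≤ i < M` the
coefficient of `X^(M+i)` becomes `p_(M+i) + p_(i+1) + 2 p_i`.  Since `p_(M+i)` vanishes unless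
`i = 0`, these are exactly the three defining rules of the corner sequence on `[M, 2M)`, so by
induction on `K` the coefficients of `P_K` below `2^(K+1)` are `c 0, c 1, …`.
-/

open Polynomial

noncomputable def cornerPoly (K : ℕ) : ℤ[X] :=
  X * (1 + X) * ∏ k ∈ Finset.Icc 1 K, (1 + X ^ (2 ^ k - 1) + 2 * X ^ (2 ^ k))

lemma cornerPoly_zero : cornerPoly 0 = X + X ^ 2 := by
  simp only [cornerPoly, Finset.Icc_eq_empty_of_lt zero_lt_one, Finset.prod_empty]
  ring

lemma cornerPoly_succ (K : ℕ) :
    cornerPoly (K + 1) =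
      cornerPoly K * (1 + X ^ (2 ^ (K + 1) - 1) + 2 * X ^ (2 ^ (K + 1))) := by
  rw [cornerPoly, cornerPoly, Finset.prod_Icc_succ_top (Nat.le_add_left 1 K), ← mul_assoc]

lemma coeff_cornerPoly_zero (K : ℕ) : (cornerPoly K).coeff 0 = 0 := by
  rw [cornerPoly, mul_assoc, coeff_X_mul_zero]

lemma natDegree_cornerPoly_le (K : ℕ) : (cornerPoly K).natDegree ≤ 2 ^ (K + 1) := by
  induction K with
  | zero => rw [cornerPoly_zero]; compute_degree!
  | succ K ih =>
    rw [cornerPoly_succ, pow_succ 2 (K + 1), mul_two]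
    refine natDegree_mul_le.trans (add_le_add ih ?_)
    compute_degree

lemma coeff_cornerPoly_of_two_pow_lt {K n : ℕ} (hn : 2 ^ (K + 1) < n) :
    (cornerPoly K).coeff n = 0 :=
  coeff_eq_zero_of_natDegree_lt ((natDegree_cornerPoly_le K).trans_lt hn)

lemma coeff_cornerPoly_succ_of_lt {K n : ℕ} (hn : n < 2 ^ (K + 1)) :
    (cornerPoly (K + 1)).coeff n = (cornerPoly K).coeff n := by
  rw [cornerPoly_succ, mul_add, mul_add, mul_one, coeff_add, coeff_add, mul_left_comm,
    coeff_ofNat_mul, coeff_mul_X_pow', coeff_mul_X_pow', if_neg hn.not_ge]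
  split_ifs
  · rw [show n - (2 ^ (K + 1) - 1) = 0 by omega, coeff_cornerPoly_zero]; ring
  · ring

lemma coeff_cornerPoly_succ_two_pow_add (K i : ℕ) :
    (cornerPoly (K + 1)).coeff (2 ^ (K + 1) + i) =
      (cornerPoly K).coeff (2 ^ (K + 1) + i) + (cornerPoly K).coeff (i + 1)
        + 2 * (cornerPoly K).coeff i := by
  have hshift : (cornerPoly K * X ^ (2 ^ (K + 1) - 1)).coeff (2 ^ (K + 1) + i) =
      (cornerPoly K).coeff (i + 1) := by
    have := Nat.one_le_two_pow (n := K + 1)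
    rw [show 2 ^ (K + 1) + i = i + 1 + (2 ^ (K + 1) - 1) by omega, coeff_mul_X_pow]
  rw [cornerPoly_succ, mul_add, mul_add, mul_one, coeff_add, coeff_add, mul_left_comm,
    coeff_ofNat_mul, hshift, add_comm (2 ^ (K + 1)) i, coeff_mul_X_pow, add_comm i]

lemma coeff_cornerPoly_two_pow (K : ℕ) : (cornerPoly K).coeff (2 ^ (K + 1)) = 2 ^ K := by
  induction K with
  | zero => simp [cornerPoly_zero, coeff_X]
  | succ K ih =>
    have hlt : 2 ^ (K + 1) < 2 ^ (K + 1) + 2 ^ (K + 1) := by simp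
    rw [pow_succ 2 (K + 1), mul_two, coeff_cornerPoly_succ_two_pow_add, ih,
      coeff_cornerPoly_of_two_pow_lt hlt, coeff_cornerPoly_of_two_pow_lt (Nat.lt_add_one _)]
    ring

theorem natCast_eq_coeff_cornerPoly_succ {c : ℕ → ℕ} {K : ℕ} (hc1 : c 1 = 1)
    (hpow : c (2 ^ (K + 1)) = 2 ^ K + 1)
    (hrec : ∀ i, 1 ≤ i → i ≤ 2 ^ (K + 1) - 2 → c (2 ^ (K + 1) + i) = 2 * c i + c (i + 1))
    (htop : c (2 ^ (K + 2) - 1) + 1 = 2 * c (2 ^ (K + 1) - 1) + c (2 ^ (K + 1)))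
    (ih : ∀ n < 2 ^ (K + 1), (c n : ℤ) = (cornerPoly K).coeff n) :
    ∀ n < 2 ^ (K + 2), (c n : ℤ) = (cornerPoly (K + 1)).coeff n := by
  have hM : 2 ^ (K + 2) = 2 ^ (K + 1) + 2 ^ (K + 1) := by rw [pow_succ 2 (K + 1), mul_two]
  have hM2 : 2 ≤ 2 ^ (K + 1) := Nat.le_self_pow (Nat.succ_ne_zero K) 2
  intro n hn
  rcases lt_or_ge n (2 ^ (K + 1)) with hlt | hge
  · rw [coeff_cornerPoly_succ_of_lt hlt, ih n hlt]
  obtain ⟨i, rfl⟩ := Nat.exists_eq_add_of_le hge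
  rw [coeff_cornerPoly_succ_two_pow_add]
  rcases Nat.eq_zero_or_pos i with rfl | hi1
  · rw [add_zero, hpow, coeff_cornerPoly_two_pow, coeff_cornerPoly_zero, ← ih 1 (by omega), hc1]
    push_cast; ring
  rcases eq_or_lt_of_le (show i + 1 ≤ 2 ^ (K + 1) by omega) with hi | hi
  · have hcorner : c (2 ^ (K + 1) + i) = 2 * c i + 2 ^ K := by
      rw [show 2 ^ (K + 1) + i = 2 ^ (K + 2) - 1 by omega, show i = 2 ^ (K + 1) - 1 by omega]
      omega
    rw [hcorner, coeff_cornerPoly_of_two_pow_lt (by omega), hi, coeff_cornerPoly_two_pow,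
      ← ih i (by omega)]
    push_cast; ring
  · rw [hrec i hi1 (by omega), coeff_cornerPoly_of_two_pow_lt (by omega), ← ih i (by omega),
      ← ih (i + 1) hi]
    push_cast; ring

/-- **Theorem 5 (corner generating function).** Let `c` be the corner sequence
(defined by its recurrence).  For every `n` and every `K` with `2^K > n`,
`c n` equals the coefficient of `x^n` in
`x (1 + x) ∏_{k=1}^{K} (1 + x^(2^k - 1) + 2 x^(2^k))` in `ℤ[x]`. -/
theorem corner_generating_function
    (c : ℕ → ℕ)
    (hc0 : c 0 = 0) (hc1 : c 1 = 1) (hc2 : c 2 = 2) (hc3 : c 3 = 3)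
    (hcpow : ∀ k, 2 ≤ k → c (2 ^ k) = 2 ^ (k - 1) + 1)
    (hcrec : ∀ k, 2 ≤ k → ∀ i, 1 ≤ i → i ≤ 2 ^ k - 2 →
      c (2 ^ k + i) = 2 * c i + c (i + 1))
    (hctop : ∀ k, 2 ≤ k → c (2 ^ (k + 1) - 1) + 1 = 2 * c (2 ^ k - 1) + c (2 ^ k)) :
    ∀ n K, n < 2 ^ K →
      (c n : ℤ) =
        (X * (1 + X) *
          ∏ k ∈ Finset.Icc 1 K,
            (1 + X ^ (2 ^ k - 1) + 2 * X ^ (2 ^ k))).coeff n := by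
  -- The rules on the block `[2^(K+1), 2^(K+2))`; for `K = 0` they hold by the initial values.
  have hpow : ∀ K, c (2 ^ (K + 1)) = 2 ^ K + 1 := by
    rintro (_ | K)
    · exact hc2
    · simpa using hcpow (K + 2) le_add_self
  have hrec : ∀ K i, 1 ≤ i → i ≤ 2 ^ (K + 1) - 2 →
      c (2 ^ (K + 1) + i) = 2 * c i + c (i + 1) := by
    rintro (_ | K)
    · intro i h1 h2; omega
    · exact hcrec (K + 2) le_add_self
  have htop : ∀ K, c (2 ^ (K + 2) - 1) + 1 = 2 * c (2 ^ (K + 1) - 1) + c (2 ^ (K + 1)) := by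
    rintro (_ | K)
    · simp [hc1, hc2, hc3]
    · exact hctop (K + 2) le_add_self
  have hcoeff : ∀ K, ∀ n < 2 ^ (K + 1), (c n : ℤ) = (cornerPoly K).coeff n := by
    intro K
    induction K with
    | zero => intro n hn; interval_cases n <;> simp [cornerPoly_zero, coeff_X, hc0, hc1]
    | succ K ih => exact natCast_eq_coeff_cornerPoly_succ hc1 (hpow K) (hrec K) (htop K) ih
  intro n K hn
  exact hcoeff K n (hn.trans (Nat.pow_lt_pow_right one_lt_two K.lt_add_one))
end

section
/- (Theorem 5, toothpick generating function) For every n >= 2 and every K with 2^K > n, t(n) + 2*t(n-1) = 2 * (the coefficient of x^(n-2) in the polynomial prod_{k=0}^{K} (1 + x^(2^k - 1) + 2*x^(2^k)) in Z[x]). (Note that the k = 0 factor equals 2 + 2x.) This is the coefficient form of the identity that the generating function of t equals x/(1+2x) * (1 + 2x * prod_{k>=0} (1 + x^(2^k - 1) + 2*x^(2^k))). -/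
/-!
Write `P_K` for the product of the factors `1 + x^(2^k - 1) + 2 x^(2^k)` over `k ≤ K`, and
`s n = t n + 2 t (n - 1)`. Multiplying `P_K` by the next factor leaves its coefficients below
`2^(K+1) - 1` unchanged, so they stabilise to a sequence `q`. As `P_K` has degree `2^(K+1) - 1`
and leading coefficient `2^(K+1)`, on the block `2^(K+1) ≤ m < 2^(K+2) - 1` this gives
`q m = q (m - 2^(K+1) + 1) + 2 q (m - 2^(K+1))`, while the toothpick recursion gives
`s (2^k + i) = s (i + 1) + 2 s i` for `2 ≤ i < 2^k`. The two recursions, and their boundary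
cases `n = 2^k` and `n = 2^k + 1`, match under `s n = 2 q (n - 2)`, so strong induction on `n`
concludes.
-/

open Polynomial

lemma coeff_mul_one_add_X_pow_add_two_mul_X_pow {R : Type*} [Semiring R] (p : R[X])
    (a b m : ℕ) :
    (p * (1 + X ^ a + 2 * X ^ b)).coeff m =
      p.coeff m + (if a ≤ m then p.coeff (m - a) else 0)
        + 2 * (if b ≤ m then p.coeff (m - b) else 0) := by
  rw [mul_add, mul_add, mul_one, ← mul_assoc, (Commute.ofNat_right p 2).eq, mul_assoc]
  simp only [coeff_add, coeff_mul_X_pow', coeff_ofNat_mul]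

noncomputable def toothpickProd (K : ℕ) : ℤ[X] :=
  ∏ k ∈ Finset.range (K + 1), (1 + X ^ (2 ^ k - 1) + 2 * X ^ (2 ^ k))

lemma toothpickProd_zero : toothpickProd 0 = 2 + 2 * X := by
  simp only [toothpickProd, zero_add, Finset.range_one, Finset.prod_singleton, pow_zero,
    Nat.sub_self, pow_one]
  ring

lemma coeff_toothpickProd_succ (K m : ℕ) :
    (toothpickProd (K + 1)).coeff m =
      (toothpickProd K).coeff m
        + (if 2 ^ (K + 1) - 1 ≤ m then (toothpickProd K).coeff (m - (2 ^ (K + 1) - 1)) else 0)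
        + 2 * (if 2 ^ (K + 1) ≤ m then (toothpickProd K).coeff (m - 2 ^ (K + 1)) else 0) := by
  rw [toothpickProd, Finset.prod_range_succ, coeff_mul_one_add_X_pow_add_two_mul_X_pow]
  rfl

lemma coeff_toothpickProd_of_two_pow_le {K m : ℕ} (hm : 2 ^ (K + 1) ≤ m) :
    (toothpickProd K).coeff m = 0 := by
  induction K generalizing m with
  | zero =>
    obtain ⟨m, rfl⟩ : ∃ m', m = m' + 2 := ⟨m - 2, by omega⟩
    simp [toothpickProd_zero, coeff_X, coeff_ofNat_succ]
  | succ K ih =>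
    rw [coeff_toothpickProd_succ, ih (by omega), ih (by omega), ih (by omega)]
    simp

lemma coeff_toothpickProd_two_pow_sub_one (K : ℕ) :
    (toothpickProd K).coeff (2 ^ (K + 1) - 1) = 2 ^ (K + 1) := by
  induction K with
  | zero => simp [toothpickProd_zero, coeff_X]
  | succ K ih =>
    have hpow : 2 ^ (K + 2) = 2 * 2 ^ (K + 1) := pow_succ' 2 (K + 1)
    rw [coeff_toothpickProd_succ, if_pos (by omega), if_pos (by omega),
      coeff_toothpickProd_of_two_pow_le (by omega), coeff_toothpickProd_of_two_pow_le (by omega),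
      show 2 ^ (K + 2) - 1 - 2 ^ (K + 1) = 2 ^ (K + 1) - 1 by omega, ih, pow_succ' 2 (K + 1)]
    ring

lemma coeff_toothpickProd_zero (K : ℕ) : (toothpickProd K).coeff 0 = 2 := by
  induction K with
  | zero => simp [toothpickProd_zero]
  | succ K ih =>
    have hpow : 2 ≤ 2 ^ (K + 1) := Nat.le_self_pow (by omega) 2
    rw [coeff_toothpickProd_succ, if_neg (by omega), if_neg (by omega), ih]
    simp

lemma coeff_toothpickProd_succ_of_lt {K m : ℕ} (hm : m < 2 ^ (K + 1) - 1) :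
    (toothpickProd (K + 1)).coeff m = (toothpickProd K).coeff m := by
  rw [coeff_toothpickProd_succ, if_neg (by omega), if_neg (by omega)]
  simp

lemma coeff_toothpickProd_of_le {K K' m : ℕ} (hK : K ≤ K') (hm : m < 2 ^ (K + 1) - 1) :
    (toothpickProd K').coeff m = (toothpickProd K).coeff m := by
  induction K', hK using Nat.le_induction with
  | base => rfl
  | succ K' hK ih =>
    have hpow : 2 ^ (K + 1) ≤ 2 ^ (K' + 1) := Nat.pow_le_pow_right (by omega) (by omega)
    rw [coeff_toothpickProd_succ_of_lt (by omega), ih]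

lemma coeff_toothpickProd_succ_of_two_pow_le {K m : ℕ} (hm : 2 ^ (K + 1) ≤ m) :
    (toothpickProd (K + 1)).coeff m =
      (toothpickProd K).coeff (m - (2 ^ (K + 1) - 1))
        + 2 * (toothpickProd K).coeff (m - 2 ^ (K + 1)) := by
  rw [coeff_toothpickProd_succ, if_pos (by omega), if_pos hm,
    coeff_toothpickProd_of_two_pow_le hm, zero_add]

/-- The coefficients of the infinite product: the `m`-th coefficient of `toothpickProd K` is the
same for all `K` with `m + 1 < 2 ^ (K + 1)`, in particular for `K = m`. -/
noncomputable def toothpickCoeff (m : ℕ) : ℤ :=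
  (toothpickProd m).coeff m

lemma coeff_toothpickProd_eq_toothpickCoeff {K m : ℕ} (hm : m < 2 ^ (K + 1) - 1) :
    (toothpickProd K).coeff m = toothpickCoeff m := by
  rcases le_total K m with hKm | hmK
  · exact (coeff_toothpickProd_of_le hKm hm).symm
  · have hlt : m < 2 ^ m := Nat.lt_two_pow_self
    exact coeff_toothpickProd_of_le hmK (by omega)

lemma toothpickCoeff_zero : toothpickCoeff 0 = 2 :=
  coeff_toothpickProd_zero 0

lemma toothpickCoeff_two_pow_sub_one (k : ℕ) :
    toothpickCoeff (2 ^ (k + 1) - 1) = 2 ^ (k + 1) + 2 := by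
  have hpos : 0 < 2 ^ (k + 1) := by positivity
  rw [← coeff_toothpickProd_eq_toothpickCoeff (K := k + 1) (by omega), coeff_toothpickProd_succ,
    if_pos le_rfl, if_neg (by omega), coeff_toothpickProd_two_pow_sub_one, Nat.sub_self,
    coeff_toothpickProd_zero]
  simp

lemma toothpickCoeff_two_pow_sub_two (k : ℕ) :
    toothpickCoeff (2 ^ (k + 2) - 2) = 2 ^ (k + 1) + 2 * toothpickCoeff (2 ^ (k + 1) - 2) := by
  have hpow : 2 ^ (k + 2) = 2 * 2 ^ (k + 1) := pow_succ' 2 (k + 1)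
  have hpos : 0 < 2 ^ (k + 1) := by positivity
  rw [← coeff_toothpickProd_eq_toothpickCoeff (K := k + 1) (by omega),
    coeff_toothpickProd_succ_of_two_pow_le (by omega),
    show 2 ^ (k + 2) - 2 - (2 ^ (k + 1) - 1) = 2 ^ (k + 1) - 1 by omega,
    show 2 ^ (k + 2) - 2 - 2 ^ (k + 1) = 2 ^ (k + 1) - 2 by omega,
    coeff_toothpickProd_two_pow_sub_one, coeff_toothpickProd_eq_toothpickCoeff (by omega)]

lemma toothpickCoeff_two_pow_add {k j : ℕ} (hj : j + 3 ≤ 2 ^ (k + 1)) :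
    toothpickCoeff (2 ^ (k + 1) + j) = toothpickCoeff (j + 1) + 2 * toothpickCoeff j := by
  rw [← coeff_toothpickProd_eq_toothpickCoeff (K := k + 1) (by omega),
    coeff_toothpickProd_succ_of_two_pow_le (by omega),
    show 2 ^ (k + 1) + j - (2 ^ (k + 1) - 1) = j + 1 by omega, Nat.add_sub_cancel_left,
    coeff_toothpickProd_eq_toothpickCoeff (by omega),
    coeff_toothpickProd_eq_toothpickCoeff (by omega)]

lemma exists_eq_two_pow_succ_add {n : ℕ} (hn : 2 ≤ n) :
    ∃ k i, i < 2 ^ (k + 1) ∧ n = 2 ^ (k + 1) + i := by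
  have hlog : 1 ≤ Nat.log 2 n := Nat.le_log_of_pow_le (by norm_num) (by simpa using hn)
  refine ⟨Nat.log 2 n - 1, n - 2 ^ Nat.log 2 n, ?_, ?_⟩ <;>
    rw [Nat.sub_add_cancel hlog]
  · have := Nat.lt_pow_succ_log_self (b := 2) (by norm_num) n
    rw [pow_succ] at this
    omega
  · have := Nat.pow_log_le_self 2 (x := n) (by omega)
    omega

section Toothpick

variable {t : ℕ → ℕ}

lemma toothpick_two_pow_add
    (htrec : ∀ k, 1 ≤ k → ∀ i, 1 ≤ i → i ≤ 2 ^ k - 1 → t (2 ^ k + i) = 2 * t i + t (i + 1))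
    {k i : ℕ} (hi : 2 ≤ i) (hik : i < 2 ^ (k + 1)) :
    t (2 ^ (k + 1) + i) + 2 * t (2 ^ (k + 1) + i - 1)
      = t (i + 1) + 2 * t i + 2 * (t i + 2 * t (i - 1)) := by
  rw [htrec (k + 1) (by omega) i (by omega) (by omega),
    show 2 ^ (k + 1) + i - 1 = 2 ^ (k + 1) + (i - 1) by omega,
    htrec (k + 1) (by omega) (i - 1) (by omega) (by omega), Nat.sub_add_cancel (by omega)]
  ring

lemma toothpick_two_pow_add_one (ht1 : t 1 = 1) (htpow : ∀ k, 1 ≤ k → t (2 ^ k) = 2 ^ k)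
    (htrec : ∀ k, 1 ≤ k → ∀ i, 1 ≤ i → i ≤ 2 ^ k - 1 → t (2 ^ k + i) = 2 * t i + t (i + 1))
    (k : ℕ) :
    t (2 ^ (k + 1) + 1) + 2 * t (2 ^ (k + 1)) = 2 ^ (k + 2) + 4 := by
  have hpos : 0 < 2 ^ k := by positivity
  have ht2 : t 2 = 2 := htpow 1 le_rfl
  rw [htrec (k + 1) (by omega) 1 le_rfl (by rw [pow_succ]; omega), ht1, one_add_one_eq_two, ht2,
    htpow (k + 1) (by omega)]
  ring

lemma toothpick_two_pow_succ (htpow : ∀ k, 1 ≤ k → t (2 ^ k) = 2 ^ k)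
    (htrec : ∀ k, 1 ≤ k → ∀ i, 1 ≤ i → i ≤ 2 ^ k - 1 → t (2 ^ k + i) = 2 * t i + t (i + 1))
    (k : ℕ) :
    t (2 ^ (k + 2)) + 2 * t (2 ^ (k + 2) - 1)
      = 2 ^ (k + 2) + 2 * (t (2 ^ (k + 1)) + 2 * t (2 ^ (k + 1) - 1)) := by
  have hpow : 2 ^ (k + 2) = 2 * 2 ^ (k + 1) := pow_succ' 2 (k + 1)
  have hpos : 0 < 2 ^ (k + 1) := by positivity
  rw [show 2 ^ (k + 2) - 1 = 2 ^ (k + 1) + (2 ^ (k + 1) - 1) by omega,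
    htrec (k + 1) (by omega) _ (by omega) le_rfl, Nat.sub_add_cancel hpos,
    htpow (k + 2) (by omega), htpow (k + 1) (by omega)]
  ring

lemma toothpick_add_two_mul_pred_eq (ht1 : t 1 = 1)
    (htpow : ∀ k, 1 ≤ k → t (2 ^ k) = 2 ^ k)
    (htrec : ∀ k, 1 ≤ k → ∀ i, 1 ≤ i → i ≤ 2 ^ k - 1 → t (2 ^ k + i) = 2 * t i + t (i + 1))
    {n : ℕ} (hn : 2 ≤ n) :
    (t n : ℤ) + 2 * t (n - 1) = 2 * toothpickCoeff (n - 2) := by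
  induction n using Nat.strong_induction_on with
  | _ n ih =>
  obtain ⟨k, i, hik, rfl⟩ := exists_eq_two_pow_succ_add hn
  rcases Nat.lt_or_ge i 2 with hi | hi
  · interval_cases i
    · cases k with
      | zero =>
        have ht2 : t 2 = 2 := htpow 1 le_rfl
        simp [ht1, ht2, toothpickCoeff_zero]
      | succ k =>
        have hprev := ih (2 ^ (k + 1)) (by omega) (by omega)
        have hstep := congrArg (Nat.cast : ℕ → ℤ) (toothpick_two_pow_succ htpow htrec k)
        push_cast at hstep
        rw [add_zero, show k + 1 + 1 = k + 2 from rfl, toothpickCoeff_two_pow_sub_two]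
        linear_combination hstep + 2 * hprev
    · have hstep := congrArg (Nat.cast : ℕ → ℤ) (toothpick_two_pow_add_one ht1 htpow htrec k)
      push_cast at hstep
      rw [Nat.add_sub_cancel, show 2 ^ (k + 1) + 1 - 2 = 2 ^ (k + 1) - 1 by omega,
        toothpickCoeff_two_pow_sub_one]
      linear_combination hstep
  · have hstep := congrArg (Nat.cast : ℕ → ℤ) (toothpick_two_pow_add htrec hi hik)
    push_cast at hstep
    have hnext := ih (i + 1) (by omega) (by omega)
    have hcur := ih i (by omega) hi
    rw [Nat.add_sub_cancel] at hnext
    rw [show 2 ^ (k + 1) + i - 2 = 2 ^ (k + 1) + (i - 2) by omega,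
      toothpickCoeff_two_pow_add (by omega), show i - 2 + 1 = i + 1 - 2 by omega]
    linear_combination hstep + hnext + 2 * hcur

end Toothpick

theorem toothpick_generating_function_general
    (t : ℕ → ℕ)
    (ht1 : t 1 = 1)
    (htpow : ∀ k, 1 ≤ k → t (2 ^ k) = 2 ^ k)
    (htrec : ∀ k, 1 ≤ k → ∀ i, 1 ≤ i → i ≤ 2 ^ k - 1 →
      t (2 ^ k + i) = 2 * t i + t (i + 1)) :
    ∀ n, 2 ≤ n → ∀ K, n < 2 ^ K →
      (t n : ℤ) + 2 * (t (n - 1) : ℤ) =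
        2 * ((∏ k ∈ Finset.range (K + 1),
              (1 + X ^ (2 ^ k - 1) + 2 * X ^ (2 ^ k)) : Polynomial ℤ)).coeff (n - 2) := by
  intro n hn K hK
  rw [← toothpickProd, coeff_toothpickProd_eq_toothpickCoeff (by omega)]
  exact toothpick_add_two_mul_pred_eq ht1 htpow htrec hn

/-- **Theorem 5 (toothpick generating function, coefficient form).** Let `t` be
the toothpick increment sequence.  For every `n ≥ 2` and every `K` with
`2^K > n`, `t n + 2 t (n-1) = 2 ·` (the coefficient of `x^(n-2)` in
`∏_{k=0}^{K} (1 + x^(2^k - 1) + 2 x^(2^k))` in `ℤ[x]`).  This is the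
coefficient form of the identity
`𝒯(x) = x/(1+2x) · (1 + 2x ∏_{k≥0} (1 + x^(2^k-1) + 2 x^(2^k)))`. -/
theorem toothpick_generating_function
    (t : ℕ → ℕ)
    (ht0 : t 0 = 0) (ht1 : t 1 = 1)
    (htpow : ∀ k, 1 ≤ k → t (2 ^ k) = 2 ^ k)
    (htrec : ∀ k, 1 ≤ k → ∀ i, 1 ≤ i → i ≤ 2 ^ k - 1 →
      t (2 ^ k + i) = 2 * t i + t (i + 1)) :
    ∀ n, 2 ≤ n → ∀ K, n < 2 ^ K →
      (t n : ℤ) + 2 * (t (n - 1) : ℤ) =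
        2 * ((∏ k ∈ Finset.range (K + 1),
              (1 + X ^ (2 ^ k - 1) + 2 * X ^ (2 ^ k)) : Polynomial ℤ)).coeff (n - 2) :=
  toothpick_generating_function_general t ht1 htpow htrec
end

section
/- (Theorem 7) For every k >= 1 and every i with 0 <= i <= 2^k - 2, t(2^k + 1 + i) = 2 * (the sum, over all m >= 0 with m <= wt(i+m), of 2^(wt(i+m) - m) * binom(wt(i+m), m)); moreover t(2^(k+1)) = 2^(k+1). -/
/-!
Write `s n` for the sum in the formula. Both `u n = 2 t (n + 1) + t (n + 2)` and `2 s n` satisfy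
`u (2 ^ k + j) = 2 u j + u (j + 1)` for `j + 3 ≤ 2 ^ k`: for `t` this is the defining recurrence
applied twice, for `s` it holds termwise, because `wt (2 ^ k + r) = wt r + 1` for `r < 2 ^ k` and
`2 ^ (w - m) * w.choose m` is the coefficient of `X ^ m` in `(X + 2) ^ w`. At the remaining
arguments `n = 2 ^ k - 2` and `n = 2 ^ k - 1` both sides are computed in closed form, so
`u = 2 s` by strong induction, and `t (2 ^ k + 1 + i) = u i` is the recurrence once more.
-/

open Finset Polynomial

lemma wt_le_self (n : ℕ) : wt n ≤ n := Nat.digit_sum_le 2 n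

lemma wt_lt_self {n : ℕ} (hn : 2 ≤ n) : wt n < n := by
  rw [wt, Nat.digits_def' one_lt_two (by omega), List.sum_cons]
  have := wt_le_self (n / 2)
  rw [wt] at this
  omega

lemma wt_two_pow_add {k r : ℕ} (hr : r < 2 ^ k) : wt (2 ^ k + r) = wt r + 1 := by
  have hlen : (Nat.digits 2 r).length ≤ k := (Nat.digits_length_le_iff one_lt_two r).2 hr
  have hdigits := Nat.digits_append_zeroes_append_digits (k := k - (Nat.digits 2 r).length)
    (n := r) one_lt_two one_pos
  rw [Nat.add_sub_cancel' hlen, mul_one, add_comm] at hdigits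
  rw [wt, ← hdigits]
  simp [wt]

lemma wt_two_pow (k : ℕ) : wt (2 ^ k) = 1 := by
  simpa [show wt 0 = 0 from rfl] using wt_two_pow_add (Nat.two_pow_pos k)

lemma wt_two_pow_sub_one (k : ℕ) : wt (2 ^ k - 1) = k := by
  induction k with
  | zero => rfl
  | succ k ih =>
    have := Nat.two_pow_pos k
    have h : 2 ^ (k + 1) - 1 = 2 ^ k + (2 ^ k - 1) := by rw [pow_succ]; omega
    rw [h, wt_two_pow_add (by omega), ih]

lemma wt_two_pow_succ_sub_two (k : ℕ) : wt (2 ^ (k + 1) - 2) = k := by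
  induction k with
  | zero => rfl
  | succ k ih =>
    have := Nat.two_pow_pos k
    have h : 2 ^ (k + 2) - 2 = 2 ^ (k + 1) + (2 ^ (k + 1) - 2) := by
      rw [pow_succ, pow_succ]; omega
    rw [h, wt_two_pow_add (by omega), ih]

lemma wt_add_two_pow_le {k N : ℕ} (h : 2 ^ k ≤ N) : wt N + 2 ^ k ≤ N + 1 := by
  set K := Nat.log 2 N
  have hK : 2 ^ K ≤ N := Nat.pow_log_le_self 2 (by have := Nat.two_pow_pos k; omega)
  have hN : N < 2 ^ K * 2 := by rw [← pow_succ]; exact Nat.lt_pow_succ_log_self one_lt_two N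
  have hkK : 2 ^ k ≤ 2 ^ K := Nat.pow_le_pow_right two_pos (Nat.le_log_of_pow_le one_lt_two h)
  have hwt : wt N = wt (N - 2 ^ K) + 1 := by
    rw [← wt_two_pow_add (k := K) (r := N - 2 ^ K) (by omega), Nat.add_sub_cancel' hK]
  have := wt_le_self (N - 2 ^ K)
  omega

lemma two_pow_mul_choose_succ_succ (w m : ℕ) :
    2 ^ (w + 1 - (m + 1)) * (w + 1).choose (m + 1) =
      2 * (2 ^ (w - (m + 1)) * w.choose (m + 1)) + 2 ^ (w - m) * w.choose m := by
  have hcoeff (w m : ℕ) : 2 ^ (w - m) * w.choose m = ((X + C 2 : ℕ[X]) ^ w).coeff m := by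
    rw [coeff_X_add_C_pow, Nat.cast_id]
  rw [hcoeff, hcoeff, hcoeff, pow_succ, mul_add, coeff_add, coeff_mul_X, coeff_mul_C]
  ring

def toothpickTerm (n m : ℕ) : ℕ := 2 ^ (wt (n + m) - m) * (wt (n + m)).choose m

noncomputable def toothpickSum (n : ℕ) : ℕ := ∑ᶠ m, toothpickTerm n m

lemma finsum_mem_eq_toothpickSum (n : ℕ) :
    ∑ᶠ m ∈ {m : ℕ | m ≤ wt (n + m)}, 2 ^ (wt (n + m) - m) * (wt (n + m)).choose m =
      toothpickSum n := by
  refine (finsum_mem_inter_support_eq' _ _ Set.univ fun m hm => ?_).trans (finsum_mem_univ _)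
  simp only [Set.mem_ofPred_eq, Set.mem_univ, iff_true]
  by_contra hlt
  exact hm (by simp [Nat.choose_eq_zero_of_lt (not_le.1 hlt)])

lemma toothpickTerm_eq_zero_of_lt {n m : ℕ} (h : wt (n + m) < m) : toothpickTerm n m = 0 := by
  simp [toothpickTerm, Nat.choose_eq_zero_of_lt h]

lemma toothpickTerm_eq_zero {n m k : ℕ} (hn : n + 2 ≤ 2 ^ k) (hm : 2 ^ k ≤ n + m) :
    toothpickTerm n m = 0 :=
  toothpickTerm_eq_zero_of_lt (by have := wt_add_two_pow_le hm; omega)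

lemma toothpickSum_eq_sum_range {n N : ℕ} (h : ∀ m, N ≤ m → toothpickTerm n m = 0) :
    toothpickSum n = ∑ m ∈ range N, toothpickTerm n m :=
  finsum_eq_sum_of_support_subset _ fun m hm => by
    by_contra hN
    exact hm (h m (by simpa using hN))

lemma toothpickTerm_two_pow_add_zero {k j : ℕ} (hj : j < 2 ^ k) :
    toothpickTerm (2 ^ k + j) 0 = 2 * toothpickTerm j 0 := by
  simp [toothpickTerm, wt_two_pow_add hj, pow_succ, mul_comm]

lemma toothpickTerm_two_pow_add_succ {k j m : ℕ} (h : j + m + 1 < 2 ^ k) :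
    toothpickTerm (2 ^ k + j) (m + 1) = 2 * toothpickTerm j (m + 1) + toothpickTerm (j + 1) m := by
  have hwt : wt (2 ^ k + j + (m + 1)) = wt (j + (m + 1)) + 1 := by
    rw [add_assoc, wt_two_pow_add (by omega)]
  simp only [toothpickTerm, hwt, show j + 1 + m = j + (m + 1) by ring]
  exact two_pow_mul_choose_succ_succ _ _

theorem toothpickSum_two_pow_add {k j : ℕ} (hj : j + 3 ≤ 2 ^ k) :
    toothpickSum (2 ^ k + j) = 2 * toothpickSum j + toothpickSum (j + 1) := by
  -- Past `m = 2 ^ k - j` all summands vanish (`2 ^ k - j - 1` for `j + 1`), and below it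
  -- `j + m + 1 < 2 ^ k`, so the sums agree termwise.
  set N := 2 ^ k - j - 1
  have hvanish (n : ℕ) (hn : n + 2 ≤ 2 ^ k) (M : ℕ) (hM : 2 ^ k ≤ n + M) :
      ∀ m, M ≤ m → toothpickTerm n m = 0 := fun m hm => toothpickTerm_eq_zero hn (by omega)
  rw [toothpickSum_eq_sum_range (N := N + 1) fun m hm => toothpickTerm_eq_zero (k := k + 1)
      (by rw [pow_succ]; omega) (by rw [pow_succ]; omega),
    toothpickSum_eq_sum_range (hvanish j (by omega) (N + 1) (by omega)),
    toothpickSum_eq_sum_range (hvanish (j + 1) (by omega) N (by omega)),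
    sum_range_succ', sum_range_succ', toothpickTerm_two_pow_add_zero (by omega),
    sum_congr rfl fun m hm => toothpickTerm_two_pow_add_succ (by simp at hm; omega),
    sum_add_distrib, ← mul_sum]
  ring

theorem toothpickSum_two_pow_succ_sub_two (k : ℕ) :
    toothpickSum (2 ^ (k + 1) - 2) = (k + 2) * 2 ^ k := by
  have h2 : 2 ≤ 2 ^ (k + 1) := Nat.le_self_pow (by omega) 2
  rw [toothpickSum_eq_sum_range (N := 2) fun m hm => toothpickTerm_eq_zero (k := k + 1)
    (by omega) (by omega)]
  simp only [sum_range_succ, sum_range_zero, toothpickTerm, add_zero,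
    show 2 ^ (k + 1) - 2 + 1 = 2 ^ (k + 1) - 1 by omega, wt_two_pow_sub_one,
    wt_two_pow_succ_sub_two]
  simp
  ring

theorem toothpickSum_two_pow_succ_sub_one (k : ℕ) :
    toothpickSum (2 ^ (k + 1) - 1) = 2 ^ (k + 1) + 2 := by
  have h2 : 2 ≤ 2 ^ (k + 1) := Nat.le_self_pow (by omega) 2
  rw [toothpickSum_eq_sum_range (N := 3) fun m hm => ?_]
  · simp only [sum_range_succ, sum_range_zero, toothpickTerm, add_zero,
      show 2 ^ (k + 1) - 1 + 1 = 2 ^ (k + 1) by omega,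
      show 2 ^ (k + 1) - 1 + 2 = 2 ^ (k + 1) + 1 by omega, wt_two_pow_sub_one, wt_two_pow,
      wt_two_pow_add (show 1 < 2 ^ (k + 1) by omega), show wt 1 = 1 from wt_two_pow 0]
    simp
  · by_cases hsmall : m - 1 < 2 ^ (k + 1)
    · apply toothpickTerm_eq_zero_of_lt
      rw [show 2 ^ (k + 1) - 1 + m = 2 ^ (k + 1) + (m - 1) by omega, wt_two_pow_add hsmall]
      have := wt_lt_self (n := m - 1) (by omega)
      omega
    · have : 2 ^ (k + 2) = 2 * 2 ^ (k + 1) := by ring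
      exact toothpickTerm_eq_zero (k := k + 2) (by omega) (by omega)

lemma eq_two_pow_sub_two_or_sub_one_or_add (n : ℕ) :
    (∃ k, n = 2 ^ (k + 1) - 2) ∨ (∃ k, n = 2 ^ (k + 1) - 1) ∨
      ∃ k j, j + 3 ≤ 2 ^ k ∧ n = 2 ^ k + j := by
  have hlow : 2 ^ Nat.log 2 (n + 2) ≤ n + 2 := Nat.pow_log_le_self 2 (by omega)
  have hhigh : n + 2 < 2 ^ (Nat.log 2 (n + 2) + 1) := Nat.lt_pow_succ_log_self one_lt_two _
  generalize Nat.log 2 (n + 2) = K at hlow hhigh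
  obtain _ | k := K
  · omega
  · rw [pow_succ _ (k + 1)] at hhigh
    rcases (by omega : n + 2 = 2 ^ (k + 1) ∨ n + 1 = 2 ^ (k + 1) ∨ 2 ^ (k + 1) + 2 ≤ n + 2)
      with h | h | h
    · exact .inl ⟨k, by omega⟩
    · exact .inr (.inl ⟨k, by omega⟩)
    · exact .inr (.inr ⟨k + 1, n - 2 ^ (k + 1), by omega, by omega⟩)

section Toothpick

variable {t : ℕ → ℕ}

lemma toothpick_two_pow_succ_sub_one (ht1 : t 1 = 1)
    (htpow : ∀ k, 1 ≤ k → t (2 ^ k) = 2 ^ k)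
    (htrec : ∀ k, 1 ≤ k → ∀ i, 1 ≤ i → i ≤ 2 ^ k - 1 → t (2 ^ k + i) = 2 * t i + t (i + 1))
    (k : ℕ) : t (2 ^ (k + 1) - 1) = (k + 1) * 2 ^ k := by
  induction k with
  | zero => simpa using ht1
  | succ k ih =>
    have := Nat.two_pow_pos k
    have h : 2 ^ (k + 2) - 1 = 2 ^ (k + 1) + (2 ^ (k + 1) - 1) := by rw [pow_succ 2 (k + 1)]; omega
    rw [h, htrec (k + 1) (by omega) _ (by omega) le_rfl, ih,
      Nat.sub_add_cancel (by omega), htpow (k + 1) (by omega)]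
    ring

theorem two_mul_toothpick_succ_add_toothpick_add_two (ht1 : t 1 = 1)
    (htpow : ∀ k, 1 ≤ k → t (2 ^ k) = 2 ^ k)
    (htrec : ∀ k, 1 ≤ k → ∀ i, 1 ≤ i → i ≤ 2 ^ k - 1 → t (2 ^ k + i) = 2 * t i + t (i + 1))
    (n : ℕ) : 2 * t (n + 1) + t (n + 2) = 2 * toothpickSum n := by
  induction n using Nat.strong_induction_on with
  | _ n ih =>
  rcases eq_two_pow_sub_two_or_sub_one_or_add n with ⟨k, rfl⟩ | ⟨k, rfl⟩ | ⟨k, j, hj, rfl⟩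
  · have h2 : 2 ≤ 2 ^ (k + 1) := Nat.le_self_pow (by omega) 2
    rw [show 2 ^ (k + 1) - 2 + 1 = 2 ^ (k + 1) - 1 by omega,
      show 2 ^ (k + 1) - 2 + 2 = 2 ^ (k + 1) by omega,
      toothpick_two_pow_succ_sub_one ht1 htpow htrec, htpow (k + 1) (by omega),
      toothpickSum_two_pow_succ_sub_two]
    ring
  · have h2 : 2 ≤ 2 ^ (k + 1) := Nat.le_self_pow (by omega) 2
    rw [show 2 ^ (k + 1) - 1 + 1 = 2 ^ (k + 1) by omega,
      show 2 ^ (k + 1) - 1 + 2 = 2 ^ (k + 1) + 1 by omega,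
      htrec (k + 1) (by omega) 1 le_rfl (by omega), htpow (k + 1) (by omega), ht1,
      show t 2 = 2 from htpow 1 le_rfl, toothpickSum_two_pow_succ_sub_one]
    ring
  · have hk : 1 ≤ k := Nat.one_le_iff_ne_zero.2 (by rintro rfl; omega)
    calc 2 * t (2 ^ k + j + 1) + t (2 ^ k + j + 2)
        = 2 * (2 * t (j + 1) + t (j + 2)) + (2 * t (j + 2) + t (j + 3)) := by
          rw [add_assoc, add_assoc, htrec k hk (j + 1) (by omega) (by omega),
            htrec k hk (j + 2) (by omega) (by omega)]
      _ = 2 * (2 * toothpickSum j) + 2 * toothpickSum (j + 1) := by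
          rw [ih j (by omega), ← ih (j + 1) (by omega)]
      _ = 2 * toothpickSum (2 ^ k + j) := by
          rw [toothpickSum_two_pow_add hj]
          ring

end Toothpick

theorem toothpick_explicit_formula_general
    (t : ℕ → ℕ)
    (ht1 : t 1 = 1)
    (htpow : ∀ k, 1 ≤ k → t (2 ^ k) = 2 ^ k)
    (htrec : ∀ k, 1 ≤ k → ∀ i, 1 ≤ i → i ≤ 2 ^ k - 1 →
      t (2 ^ k + i) = 2 * t i + t (i + 1)) :
    ∀ k, 1 ≤ k →
      (∀ i, i ≤ 2 ^ k - 2 →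
        t (2 ^ k + 1 + i) =
          2 * ∑ᶠ m ∈ {m : ℕ | m ≤ wt (i + m)},
                2 ^ (wt (i + m) - m) * (wt (i + m)).choose m) ∧
      t (2 ^ (k + 1)) = 2 ^ (k + 1) := by
  intro k hk
  refine ⟨fun i hi => ?_, htpow (k + 1) (by omega)⟩
  have h2 : 2 ≤ 2 ^ k := Nat.le_self_pow (by omega) 2
  rw [add_assoc, htrec k hk (1 + i) (by omega) (by omega), finsum_mem_eq_toothpickSum,
    ← two_mul_toothpick_succ_add_toothpick_add_two ht1 htpow htrec, add_comm 1 i]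

/-- **Theorem 7.** For the toothpick increment sequence `t`, for every `k ≥ 1`
and every `i` with `0 ≤ i ≤ 2^k - 2`,
`t (2^k + 1 + i) = 2 ∑_{m ≥ 0, m ≤ wt(i+m)} 2^(wt(i+m)-m) C(wt(i+m), m)`;
moreover `t (2^(k+1)) = 2^(k+1)`. -/
theorem toothpick_explicit_formula
    (t : ℕ → ℕ)
    (ht0 : t 0 = 0) (ht1 : t 1 = 1)
    (htpow : ∀ k, 1 ≤ k → t (2 ^ k) = 2 ^ k)
    (htrec : ∀ k, 1 ≤ k → ∀ i, 1 ≤ i → i ≤ 2 ^ k - 1 →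
      t (2 ^ k + i) = 2 * t i + t (i + 1)) :
    ∀ k, 1 ≤ k →
      (∀ i, i ≤ 2 ^ k - 2 →
        t (2 ^ k + 1 + i) =
          2 * ∑ᶠ m ∈ {m : ℕ | m ≤ wt (i + m)},
                2 ^ (wt (i + m) - m) * (wt (i + m)).choose m) ∧
      t (2 ^ (k + 1)) = 2 ^ (k + 1) :=
  toothpick_explicit_formula_general t ht1 htpow htrec
end
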